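/- arXiv:2308.09131 — 9 statements merged into one kernel-verified Lean document; each statement's English description precedes it below -/
import Mathlib

section
/- Suppose an operator f on ℂ^G ⊗ ℂ^n satisfies 𝐔^{g_i,g_j} f (𝐔^{g_i,g_j})† = (Y ⊗ Z)† f (Y ⊗ Z) for some frame orientations g_i, g_j ∈ G and some unitaries Y on ℂ^G and Z on ℂ^n. Then for arbitrary orientations g_i', g_j' ∈ G one has 𝐔^{g_i',g_j'} f (𝐔^{g_i',g_j'})† = (Y' ⊗ Z')† f (Y' ⊗ Z'), where Y' = Y · L_{(g_i' g_j')⁻¹ g_i g_j} and Z' = Z · U_S(g_j (g_j')⁻¹). -/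
open Matrix Kronecker

variable {G : Type*} [Fintype G] [CommGroup G] [DecidableEq G] {n : ℕ}

/-- The QRF-transformation unitary `𝐔^{g_i,g_j} = Σ_g |g g_i⟩⟨g_j g⁻¹| ⊗ U_S(g)`
on `ℂ^G ⊗ ℂ^n`. -/
noncomputable def Uqrf (U : G →* Matrix.unitaryGroup (Fin n) ℂ) (gi gj : G) :
    Matrix (G × Fin n) (G × Fin n) ℂ :=
  ∑ g : G, Matrix.single (g * gi) (gj * g⁻¹) (1 : ℂ) ⊗ₖ
    (U g : Matrix (Fin n) (Fin n) ℂ)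

/-- The left-translation permutation unitary `L_g` on `ℂ^G`, with `L_g |g'⟩ = |g g'⟩`. -/
noncomputable def Lmat (g : G) : Matrix G G ℂ :=
  Matrix.of fun a b => if a = g * b then 1 else 0

/-
Changing the orientations only multiplies the QRF unitary on the left by a bilocal unitary:
reindexing the defining sum by `g ↦ gj' gj⁻¹ g` gives
`𝐔^{gi',gj'} = (L_c ⊗ U_S(d)) 𝐔^{gi,gj}` with `c = (gi gj)⁻¹ (gi' gj')` and `d = gj' gj⁻¹`.
Conjugating the hypothesis by `W = L_c ⊗ U_S(d)` and absorbing `W` into `Y ⊗ Z`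
yields the claim, since `W† = L_{c⁻¹} ⊗ U_S(d⁻¹)`.
-/

theorem Matrix.conj_mul_eq_of_conj_eq {m α : Type*} [Fintype m] [Semiring α] [StarRing α]
    {A B f : Matrix m m α} (W : Matrix m m α) (h : A * f * Aᴴ = Bᴴ * f * B) :
    W * A * f * (W * A)ᴴ = (B * Wᴴ)ᴴ * f * (B * Wᴴ) := by
  rw [conjTranspose_mul, conjTranspose_mul, conjTranspose_conjTranspose]
  calc W * A * f * (Aᴴ * Wᴴ) = W * (A * f * Aᴴ) * Wᴴ := by simp only [mul_assoc]
    _ = W * Bᴴ * f * (B * Wᴴ) := by rw [h]; simp only [mul_assoc]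

section

variable {Γ : Type*} [CommGroup Γ] [DecidableEq Γ]

theorem Lmat_mul_single [Fintype Γ] (c x y : Γ) :
    Lmat c * single x y (1 : ℂ) = single (c * x) y 1 := by
  ext a b
  by_cases hb : b = y
  · subst hb
    simp [mul_single_apply_same, Lmat, single_apply, eq_comm]
  · simp [mul_single_apply_of_ne (hbj := hb), Ne.symm hb]

theorem conjTranspose_Lmat (c : Γ) : (Lmat c)ᴴ = Lmat c⁻¹ := by
  ext a b
  simp [Lmat, eq_inv_mul_iff_mul_eq, eq_comm]

end

theorem Uqrf_eq_kronecker_mul (U : G →* unitaryGroup (Fin n) ℂ) (gi gj gi' gj' : G) :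
    Uqrf U gi' gj' =
      (Lmat ((gi * gj)⁻¹ * (gi' * gj')) ⊗ₖ (U (gj' * gj⁻¹) : Matrix (Fin n) (Fin n) ℂ)) *
        Uqrf U gi gj := by
  rw [Uqrf, Uqrf, Finset.mul_sum]
  refine (Fintype.sum_equiv (Equiv.mulLeft (gj' * gj⁻¹)) _ _ fun g => ?_).symm
  have hrow : (gi * gj)⁻¹ * (gi' * gj') * (g * gi) = gj' * gj⁻¹ * g * gi' := by
    apply Additive.ofMul.injective
    simp only [ofMul_mul, ofMul_inv]
    abel
  have hcol : gj * g⁻¹ = gj' * (gj' * gj⁻¹ * g)⁻¹ := by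
    apply Additive.ofMul.injective
    simp only [ofMul_mul, ofMul_inv]
    abel
  rw [← mul_kronecker_mul, Lmat_mul_single, hrow, hcol, ← Submonoid.coe_mul, ← map_mul]
  rfl

theorem AX_mem_all_orientations_general
    (U : G →* Matrix.unitaryGroup (Fin n) ℂ) (gi gj : G)
    (Y : Matrix G G ℂ)
    (Z : Matrix (Fin n) (Fin n) ℂ)
    (f : Matrix (G × Fin n) (G × Fin n) ℂ)
    (hf : Uqrf U gi gj * f * (Uqrf U gi gj)ᴴ = (Y ⊗ₖ Z)ᴴ * f * (Y ⊗ₖ Z)) :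
    ∀ gi' gj' : G,
      Uqrf U gi' gj' * f * (Uqrf U gi' gj')ᴴ =
        ((Y * Lmat ((gi' * gj')⁻¹ * (gi * gj))) ⊗ₖ
            (Z * (U (gj * gj'⁻¹) : Matrix (Fin n) (Fin n) ℂ)))ᴴ * f *
          ((Y * Lmat ((gi' * gj')⁻¹ * (gi * gj))) ⊗ₖ
            (Z * (U (gj * gj'⁻¹) : Matrix (Fin n) (Fin n) ℂ))) := by
  intro gi' gj'
  have hW : (Lmat ((gi * gj)⁻¹ * (gi' * gj')) ⊗ₖ (U (gj' * gj⁻¹) : Matrix (Fin n) (Fin n) ℂ))ᴴ =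
      Lmat ((gi' * gj')⁻¹ * (gi * gj)) ⊗ₖ (U (gj * gj'⁻¹) : Matrix (Fin n) (Fin n) ℂ) := by
    rw [conjTranspose_kronecker, conjTranspose_Lmat, ← star_eq_conjTranspose,
      ← UnitaryGroup.inv_val, ← map_inv]
    congr 4 <;> group
  rw [Uqrf_eq_kronecker_mul U gi gj gi' gj', mul_kronecker_mul, ← hW]
  exact conj_mul_eq_of_conj_eq _ hf

/-- If `f` is invariant up to the bilocal unitary `Y ⊗ Z` under the QRF
transformation with orientations `g_i, g_j`, then for arbitrary orientations `g_i', g_j'`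
it is invariant up to `Y' ⊗ Z'` with `Y' = Y·L_{(g_i'g_j')⁻¹ g_i g_j}` and
`Z' = Z·U_S(g_j g_j'⁻¹)`. -/
theorem AX_mem_all_orientations (hn : 1 ≤ n)
    (U : G →* Matrix.unitaryGroup (Fin n) ℂ) (gi gj : G)
    (Y : Matrix G G ℂ) (hY : Y ∈ Matrix.unitaryGroup G ℂ)
    (Z : Matrix (Fin n) (Fin n) ℂ) (hZ : Z ∈ Matrix.unitaryGroup (Fin n) ℂ)
    (f : Matrix (G × Fin n) (G × Fin n) ℂ)
    (hf : Uqrf U gi gj * f * (Uqrf U gi gj)ᴴ = (Y ⊗ₖ Z)ᴴ * f * (Y ⊗ₖ Z)) :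
    ∀ gi' gj' : G,
      Uqrf U gi' gj' * f * (Uqrf U gi' gj')ᴴ =
        ((Y * Lmat ((gi' * gj')⁻¹ * (gi * gj))) ⊗ₖ
            (Z * (U (gj * gj'⁻¹) : Matrix (Fin n) (Fin n) ℂ)))ᴴ * f *
          ((Y * Lmat ((gi' * gj')⁻¹ * (gi * gj))) ⊗ₖ
            (Z * (U (gj * gj'⁻¹) : Matrix (Fin n) (Fin n) ℂ))) :=
  AX_mem_all_orientations_general U gi gj Y Z f hf
end

section
/- For any frame orientations g_i, g_j ∈ G, let 𝐔̂ denote the conjugation superoperator 𝐔̂(f) := 𝐔 f 𝐔†. Then, as superoperators on operators of ℂ^G ⊗ ℂ^n: 𝐔̂ ∘ Π_t = Π_t ∘ 𝐔̂, 𝐔̂ ∘ Π_d = Π_d ∘ 𝐔̂, and Π_t ∘ Π_d = Π_d ∘ Π_t. -/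
/-!
All three superoperators are sums of conjugations `f ↦ w f wᴴ` (for `Π_d` because the frame
projectors `|g⟩⟨g| ⊗ 1` are Hermitian). Conjugation by `a` commutes with such a sum as soon as
`a` intertwines the family with a permutation of a second family, `a w_i = w'_{σ i} a`. Since `G`
is abelian, `𝐔` commutes with every `1 ⊗ U_S(h)`, and it carries `|g⟩⟨g| ⊗ 1` to
`|g⁻¹ g_j g_i⟩⟨g⁻¹ g_j g_i| ⊗ 1`, a permutation of the frame projectors; and the frame projectors
commute with every `1 ⊗ U_S(h)`.
-/

open Matrix Kronecker

variable {G : Type*} [Fintype G] [CommGroup G] [DecidableEq G] {n : ℕ}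

/-- The `G`-twirl superoperator over system translations. -/
noncomputable def Pit (U : G →* Matrix.unitaryGroup (Fin n) ℂ)
    (f : Matrix (G × Fin n) (G × Fin n) ℂ) : Matrix (G × Fin n) (G × Fin n) ℂ :=
  (Fintype.card G : ℂ)⁻¹ • ∑ g : G,
    ((1 : Matrix G G ℂ) ⊗ₖ (U g : Matrix (Fin n) (Fin n) ℂ)) * f *
      ((1 : Matrix G G ℂ) ⊗ₖ (U g : Matrix (Fin n) (Fin n) ℂ))ᴴ

/-- The frame-diagonalising superoperator. -/
noncomputable def Pid (f : Matrix (G × Fin n) (G × Fin n) ℂ) :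
    Matrix (G × Fin n) (G × Fin n) ℂ :=
  ∑ g : G,
    (Matrix.single g g (1 : ℂ) ⊗ₖ (1 : Matrix (Fin n) (Fin n) ℂ)) * f *
      (Matrix.single g g (1 : ℂ) ⊗ₖ (1 : Matrix (Fin n) (Fin n) ℂ))

section ConjugationSums

variable {R ι κ : Type*} [Fintype ι] [Fintype κ] [NonUnitalSemiring R] [StarMul R]

theorem conj_conj_eq_of_intertwines {a w w' : R} (h : a * w = w' * a) (f : R) :
    a * (w * f * star w) * star a = w' * (a * f * star a) * star w' := by
  have h' : star w * star a = star a * star w' := by rw [← star_mul, h, star_mul]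
  calc a * (w * f * star w) * star a = a * w * f * (star w * star a) := by
        simp only [mul_assoc]
    _ = w' * a * f * (star a * star w') := by rw [h, h']
    _ = w' * (a * f * star a) * star w' := by simp only [mul_assoc]

theorem conj_sum_conj_eq_of_intertwines (e : ι ≃ ι) {a : R} {w w' : ι → R}
    (h : ∀ i, a * w i = w' (e i) * a) (f : R) :
    a * (∑ i, w i * f * star (w i)) * star a = ∑ i, w' i * (a * f * star a) * star (w' i) := by
  rw [Finset.mul_sum, Finset.sum_mul]
  exact Fintype.sum_equiv e _ _ fun i => conj_conj_eq_of_intertwines (h i) f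

theorem sum_conj_sum_conj_comm_of_commute {v : ι → R} {w : κ → R} (h : ∀ i j, Commute (v i) (w j))
    (f : R) :
    ∑ i, v i * (∑ j, w j * f * star (w j)) * star (v i) =
      ∑ j, w j * (∑ i, v i * f * star (v i)) * star (w j) := by
  simp only [Finset.mul_sum, Finset.sum_mul]
  rw [Finset.sum_comm]
  exact Finset.sum_congr rfl fun j _ => Finset.sum_congr rfl fun i _ =>
    conj_conj_eq_of_intertwines (h i j).eq f

end ConjugationSums

theorem Matrix.kronecker_one_commute_one_kronecker {l m R : Type*} [Fintype l] [Fintype m]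
    [DecidableEq l] [DecidableEq m] [CommSemiring R] (A : Matrix l l R) (B : Matrix m m R) :
    Commute (A ⊗ₖ (1 : Matrix m m R)) ((1 : Matrix l l R) ⊗ₖ B) := by
  simp only [Commute, SemiconjBy, ← mul_kronecker_mul, Matrix.mul_one, Matrix.one_mul]

theorem Uqrf_commute_one_kronecker (U : G →* Matrix.unitaryGroup (Fin n) ℂ) (gi gj h : G) :
    Commute (Uqrf U gi gj) ((1 : Matrix G G ℂ) ⊗ₖ (U h : Matrix (Fin n) (Fin n) ℂ)) := by
  refine Commute.sum_left _ _ _ fun g _ => ?_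
  simp only [Commute, SemiconjBy, ← mul_kronecker_mul, Matrix.mul_one, Matrix.one_mul]
  rw [← MulMemClass.coe_mul, ← MulMemClass.coe_mul, ← map_mul, ← map_mul, mul_comm g h]

theorem Uqrf_mul_single_kronecker_one (U : G →* Matrix.unitaryGroup (Fin n) ℂ) (gi gj g : G) :
    Uqrf U gi gj * (single g g (1 : ℂ) ⊗ₖ (1 : Matrix (Fin n) (Fin n) ℂ)) =
      (single (g⁻¹ * (gj * gi)) (g⁻¹ * (gj * gi)) (1 : ℂ) ⊗ₖ (1 : Matrix (Fin n) (Fin n) ℂ)) *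
        Uqrf U gi gj := by
  have hcol : ∀ k, k ≠ g⁻¹ * gj → gj * k⁻¹ ≠ g := fun k hk hkg => hk (by rw [← hkg]; group)
  have hrow : ∀ k, k ≠ g⁻¹ * gj → g⁻¹ * (gj * gi) ≠ k * gi := fun k hk hkg =>
    hk (mul_right_cancel (by rwa [← mul_assoc] at hkg)).symm
  rw [Uqrf, Finset.sum_mul, Finset.mul_sum, Finset.sum_eq_single (g⁻¹ * gj),
    Finset.sum_eq_single (g⁻¹ * gj)]
  · rw [show gj * (g⁻¹ * gj)⁻¹ = g by group]
    simp only [← mul_kronecker_mul, Matrix.one_mul, mul_assoc, single_mul_single_same, mul_one]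
  · intro k _ hk
    rw [← mul_kronecker_mul, single_mul_single_of_ne (h := hrow k hk), zero_kronecker]
  · simp
  · intro k _ hk
    rw [← mul_kronecker_mul, single_mul_single_of_ne (h := hcol k hk), zero_kronecker]
  · simp

omit [CommGroup G] in
theorem Pid_eq_sum_conj (f : Matrix (G × Fin n) (G × Fin n) ℂ) :
    Pid f = ∑ g : G, (single g g (1 : ℂ) ⊗ₖ (1 : Matrix (Fin n) (Fin n) ℂ)) * f *
      (single g g (1 : ℂ) ⊗ₖ (1 : Matrix (Fin n) (Fin n) ℂ))ᴴ := by
  simp only [Pid, conjTranspose_kronecker, conjTranspose_single, star_one, conjTranspose_one]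

omit [CommGroup G] in
theorem Pid_smul (c : ℂ) (f : Matrix (G × Fin n) (G × Fin n) ℂ) : Pid (c • f) = c • Pid f := by
  simp only [Pid, Matrix.mul_smul, Matrix.smul_mul, Finset.smul_sum]

theorem Uhat_commutes_with_Pit_Pid_general
    (U : G →* Matrix.unitaryGroup (Fin n) ℂ) (gi gj : G) :
    (∀ f : Matrix (G × Fin n) (G × Fin n) ℂ,
        Uqrf U gi gj * Pit U f * (Uqrf U gi gj)ᴴ =
          Pit U (Uqrf U gi gj * f * (Uqrf U gi gj)ᴴ)) ∧
      (∀ f : Matrix (G × Fin n) (G × Fin n) ℂ,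
        Uqrf U gi gj * Pid f * (Uqrf U gi gj)ᴴ =
          Pid (Uqrf U gi gj * f * (Uqrf U gi gj)ᴴ)) ∧
      (∀ f : Matrix (G × Fin n) (G × Fin n) ℂ, Pit U (Pid f) = Pid (Pit U f)) := by
  refine ⟨fun f => ?_, fun f => ?_, fun f => ?_⟩
  · rw [Pit, Pit, Matrix.mul_smul, Matrix.smul_mul]
    exact congrArg _ <| conj_sum_conj_eq_of_intertwines (Equiv.refl G)
      (fun h => (Uqrf_commute_one_kronecker U gi gj h).eq) f
  · rw [Pid_eq_sum_conj, Pid_eq_sum_conj]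
    exact conj_sum_conj_eq_of_intertwines ((Equiv.inv G).trans (Equiv.mulRight (gj * gi)))
      (Uqrf_mul_single_kronecker_one U gi gj) f
  · rw [Pit, Pit, Pid_smul, Pid_eq_sum_conj, Pid_eq_sum_conj]
    exact congrArg _ <| sum_conj_sum_conj_comm_of_commute
      (fun _ _ => (kronecker_one_commute_one_kronecker _ _).symm) f

/-- The conjugation superoperator `𝐔̂(f) = 𝐔 f 𝐔†` commutes with both
projectors `Π_t` and `Π_d`, and the two projectors commute with each other. -/
theorem Uhat_commutes_with_Pit_Pid (hn : 1 ≤ n)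
    (U : G →* Matrix.unitaryGroup (Fin n) ℂ) (gi gj : G) :
    (∀ f : Matrix (G × Fin n) (G × Fin n) ℂ,
        Uqrf U gi gj * Pit U f * (Uqrf U gi gj)ᴴ =
          Pit U (Uqrf U gi gj * f * (Uqrf U gi gj)ᴴ)) ∧
      (∀ f : Matrix (G × Fin n) (G × Fin n) ℂ,
        Uqrf U gi gj * Pid f * (Uqrf U gi gj)ᴴ =
          Pid (Uqrf U gi gj * f * (Uqrf U gi gj)ᴴ)) ∧
      (∀ f : Matrix (G × Fin n) (G × Fin n) ℂ, Pit U (Pid f) = Pid (Pit U f)) :=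
  Uhat_commutes_with_Pit_Pid_general U gi gj
end

section
/- Let f_S be an n×n complex matrix. The following are equivalent: (a) there exist frame orientations g_i, g_j ∈ G and unitaries Y on ℂ^G, Z on ℂ^n such that 𝐔^{g_i,g_j} (1_G ⊗ f_S) (𝐔^{g_i,g_j})† = (Y ⊗ Z)† (1_G ⊗ f_S) (Y ⊗ Z); (b) f_S commutes with U_S(g) for all g ∈ G. Moreover, when (b) holds, then for all orientations g_i, g_j ∈ G one has exact invariance 𝐔^{g_i,g_j} (1_G ⊗ f_S) (𝐔^{g_i,g_j})† = 1_G ⊗ f_S, and for every bilocal unitary X = Y ⊗ Z the membership 1_G ⊗ f_S ∈ 𝒜^X holds if and only if Z commutes with f_S (with Y arbitrary). -/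
open Matrix Kronecker

variable {G : Type*} [Fintype G] [CommGroup G] [DecidableEq G] {n : ℕ}

/-!
Conjugating `1 ⊗ f` by `𝐔^{g_i,g_j}` gives the block-diagonal operator
`Σ_g |g g_i⟩⟨g g_i| ⊗ U(g) f U(g)†`, while conjugating it by `Y ⊗ Z` gives `1 ⊗ Z† f Z`.
The two agree iff every block `U(g) f U(g)†` equals `Z† f Z`; the block at `g = e` is `f`
itself, so this says exactly that `Z` commutes with `f` and that `f` commutes with every `U(g)`.
-/

section BlockDiagonal

variable {ι κ m R : Type*} [Fintype ι] [DecidableEq ι] [Fintype κ] [Semiring R]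

theorem sum_single_kronecker_apply (e : κ ≃ ι) (F : κ → Matrix m m R) (a b : ι) (r s : m) :
    (∑ k, single (e k) (e k) (1 : R) ⊗ₖ F k) (a, r) (b, s) =
      if a = b then F (e.symm a) r s else 0 := by
  rw [Matrix.sum_apply, ← e.symm.sum_comp]
  simp [single_apply, ite_and]

theorem sum_single_kronecker_eq_one_kronecker_iff (e : κ ≃ ι) (F : κ → Matrix m m R)
    (N : Matrix m m R) :
    ∑ k, single (e k) (e k) (1 : R) ⊗ₖ F k = (1 : Matrix ι ι R) ⊗ₖ N ↔ ∀ k, F k = N := by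
  refine ⟨fun h k => ?_, fun h => ?_⟩
  · ext r s
    simpa [sum_single_kronecker_apply] using congrFun (congrFun h (e k, r)) (e k, s)
  · ext ⟨a, r⟩ ⟨b, s⟩
    simp [sum_single_kronecker_apply, h, one_apply, ite_mul]

end BlockDiagonal

theorem conjTranspose_kronecker_mul_one_kronecker_mul {l m R : Type*} [Fintype l]
    [DecidableEq l] [Fintype m] [CommRing R] [StarRing R] {Y : Matrix l l R}
    (hY : Y ∈ unitaryGroup l R) (Z f : Matrix m m R) :
    (Y ⊗ₖ Z)ᴴ * (1 ⊗ₖ f) * (Y ⊗ₖ Z) = 1 ⊗ₖ (Zᴴ * f * Z) := by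
  rw [conjTranspose_kronecker, ← mul_kronecker_mul, ← mul_kronecker_mul, Matrix.mul_one,
    ← star_eq_conjTranspose, Unitary.star_mul_self_of_mem hY]

theorem Uqrf_mul_one_kronecker_mul_conjTranspose (U : G →* unitaryGroup (Fin n) ℂ) (gi gj : G)
    (f : Matrix (Fin n) (Fin n) ℂ) :
    Uqrf U gi gj * (1 ⊗ₖ f) * (Uqrf U gi gj)ᴴ =
      ∑ g, single (g * gi) (g * gi) (1 : ℂ) ⊗ₖ
        ((U g : Matrix (Fin n) (Fin n) ℂ) * f * (U g : Matrix (Fin n) (Fin n) ℂ)ᴴ) := by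
  have hterm : ∀ g h : G,
      (single (g * gi) (gj * g⁻¹) (1 : ℂ) ⊗ₖ (U g : Matrix (Fin n) (Fin n) ℂ)) * (1 ⊗ₖ f) *
          (single (h * gi) (gj * h⁻¹) (1 : ℂ) ⊗ₖ (U h : Matrix (Fin n) (Fin n) ℂ))ᴴ =
        (single (g * gi) (gj * g⁻¹) (1 : ℂ) * single (gj * h⁻¹) (h * gi) 1) ⊗ₖ
          ((U g : Matrix (Fin n) (Fin n) ℂ) * f * (U h : Matrix (Fin n) (Fin n) ℂ)ᴴ) := by
    intro g h
    rw [conjTranspose_kronecker, conjTranspose_single, star_one, ← mul_kronecker_mul,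
      ← mul_kronecker_mul, Matrix.mul_one]
  simp only [Uqrf, conjTranspose_sum, Finset.sum_mul, Finset.mul_sum, hterm]
  refine Finset.sum_congr rfl fun g _ => ?_
  rw [Finset.sum_eq_single g (fun h _ hne => ?_) (by simp), single_mul_single_same, mul_one]
  have hne' : gj * h⁻¹ ≠ gj * g⁻¹ := by simpa using hne
  rw [single_mul_single_of_ne (h := hne'), zero_kronecker]

theorem Uqrf_conj_eq_bilocal_conj_iff (U : G →* unitaryGroup (Fin n) ℂ) (gi gj : G)
    (f : Matrix (Fin n) (Fin n) ℂ) {Y : Matrix G G ℂ} (hY : Y ∈ unitaryGroup G ℂ)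
    {Z : Matrix (Fin n) (Fin n) ℂ} (hZ : Z ∈ unitaryGroup (Fin n) ℂ) :
    Uqrf U gi gj * (1 ⊗ₖ f) * (Uqrf U gi gj)ᴴ = (Y ⊗ₖ Z)ᴴ * (1 ⊗ₖ f) * (Y ⊗ₖ Z) ↔
      Commute Z f ∧ ∀ g, Commute f (U g : Matrix (Fin n) (Fin n) ℂ) := by
  rw [Uqrf_mul_one_kronecker_mul_conjTranspose, conjTranspose_kronecker_mul_one_kronecker_mul hY]
  refine (sum_single_kronecker_eq_one_kronecker_iff (Equiv.mulRight gi) _ _).trans ?_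
  constructor
  · intro h
    have hZf : Zᴴ * f * Z = f := by simpa using (h 1).symm
    exact ⟨(commute_unitary_iff_star_left_conjugate hZ).2 hZf, fun g =>
      ((commute_unitary_iff_star_right_conjugate (U g).2).2 ((h g).trans hZf)).symm⟩
  · rintro ⟨hZf, hf⟩ g
    exact ((commute_unitary_iff_star_right_conjugate (U g).2).1 (hf g).symm).trans
      ((commute_unitary_iff_star_left_conjugate hZ).1 hZf).symm

theorem S_local_TPS_invariant_iff_general
    (U : G →* Matrix.unitaryGroup (Fin n) ℂ) (fS : Matrix (Fin n) (Fin n) ℂ) :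
    ((∃ gi gj : G, ∃ Y ∈ Matrix.unitaryGroup G ℂ, ∃ Z ∈ Matrix.unitaryGroup (Fin n) ℂ,
        Uqrf U gi gj * ((1 : Matrix G G ℂ) ⊗ₖ fS) * (Uqrf U gi gj)ᴴ =
          (Y ⊗ₖ Z)ᴴ * ((1 : Matrix G G ℂ) ⊗ₖ fS) * (Y ⊗ₖ Z)) ↔
      (∀ g : G, fS * (U g : Matrix (Fin n) (Fin n) ℂ) =
          (U g : Matrix (Fin n) (Fin n) ℂ) * fS)) ∧
    ((∀ g : G, fS * (U g : Matrix (Fin n) (Fin n) ℂ) =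
          (U g : Matrix (Fin n) (Fin n) ℂ) * fS) →
      (∀ gi gj : G,
        Uqrf U gi gj * ((1 : Matrix G G ℂ) ⊗ₖ fS) * (Uqrf U gi gj)ᴴ =
          (1 : Matrix G G ℂ) ⊗ₖ fS) ∧
      (∀ gi gj : G, ∀ Y ∈ Matrix.unitaryGroup G ℂ, ∀ Z ∈ Matrix.unitaryGroup (Fin n) ℂ,
        (Uqrf U gi gj * ((1 : Matrix G G ℂ) ⊗ₖ fS) * (Uqrf U gi gj)ᴴ =
            (Y ⊗ₖ Z)ᴴ * ((1 : Matrix G G ℂ) ⊗ₖ fS) * (Y ⊗ₖ Z)) ↔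
          Z * fS = fS * Z)) := by
  refine ⟨⟨fun ⟨gi, gj, Y, hY, Z, hZ, h⟩ =>
      ((Uqrf_conj_eq_bilocal_conj_iff U gi gj fS hY hZ).1 h).2,
    fun hcomm => ⟨1, 1, 1, one_mem _, 1, one_mem _,
      (Uqrf_conj_eq_bilocal_conj_iff U 1 1 fS (one_mem _) (one_mem _)).2
        ⟨Commute.one_left fS, hcomm⟩⟩⟩,
    fun hcomm => ⟨fun gi gj => ?_, fun gi gj Y hY Z hZ =>
      (Uqrf_conj_eq_bilocal_conj_iff U gi gj fS hY hZ).trans (and_iff_left hcomm)⟩⟩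
  simpa using (Uqrf_conj_eq_bilocal_conj_iff U gi gj fS (one_mem _) (one_mem _)).2
    ⟨Commute.one_left fS, hcomm⟩

/-- TPS-invariant system operators. An `S`-local operator `1_G ⊗ f_S` is
invariant up to some bilocal unitary under some QRF transformation iff `f_S` is
translation-invariant; in that case it is exactly invariant for all orientations, and it
lies in `𝒜^{Y⊗Z}` iff `Z` commutes with `f_S` (with `Y` arbitrary). -/
theorem S_local_TPS_invariant_iff (hn : 1 ≤ n)
    (U : G →* Matrix.unitaryGroup (Fin n) ℂ) (fS : Matrix (Fin n) (Fin n) ℂ) :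
    ((∃ gi gj : G, ∃ Y ∈ Matrix.unitaryGroup G ℂ, ∃ Z ∈ Matrix.unitaryGroup (Fin n) ℂ,
        Uqrf U gi gj * ((1 : Matrix G G ℂ) ⊗ₖ fS) * (Uqrf U gi gj)ᴴ =
          (Y ⊗ₖ Z)ᴴ * ((1 : Matrix G G ℂ) ⊗ₖ fS) * (Y ⊗ₖ Z)) ↔
      (∀ g : G, fS * (U g : Matrix (Fin n) (Fin n) ℂ) =
          (U g : Matrix (Fin n) (Fin n) ℂ) * fS)) ∧
    ((∀ g : G, fS * (U g : Matrix (Fin n) (Fin n) ℂ) =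
          (U g : Matrix (Fin n) (Fin n) ℂ) * fS) →
      (∀ gi gj : G,
        Uqrf U gi gj * ((1 : Matrix G G ℂ) ⊗ₖ fS) * (Uqrf U gi gj)ᴴ =
          (1 : Matrix G G ℂ) ⊗ₖ fS) ∧
      (∀ gi gj : G, ∀ Y ∈ Matrix.unitaryGroup G ℂ, ∀ Z ∈ Matrix.unitaryGroup (Fin n) ℂ,
        (Uqrf U gi gj * ((1 : Matrix G G ℂ) ⊗ₖ fS) * (Uqrf U gi gj)ᴴ =
            (Y ⊗ₖ Z)ᴴ * ((1 : Matrix G G ℂ) ⊗ₖ fS) * (Y ⊗ₖ Z)) ↔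
          Z * fS = fS * Z)) :=
  S_local_TPS_invariant_iff_general U fS
end

section
/- Assume that for every h ∈ G with h ≠ e, the unitary U_S(h) is not a complex scalar multiple of the identity 1_n. Let f be a G×G complex matrix. The following are equivalent: (a) there exist frame orientations g_i, g_j ∈ G and un30itaries Y on ℂ^G, Z on ℂ^n such that 𝐔^{g_i,g_j} (f ⊗ 1_n) (𝐔^{g_i,g_j})† = (Y ⊗ Z)† (f ⊗ 1_n) (Y ⊗ Z); (b) f is diagonal in the group basis, i.e. ⟨g|f|g'⟩ = 0 whenever g ≠ g'. Moreover, when f is diagonal, then for any orientations g_i, g_j ∈ G and any bilocal unitary X = Y ⊗ Z the membership f ⊗ 1_n ∈ 𝒜^X holds if and only if Y† f Y = P f P† (with Z arbitrary), where P = P^{g_i,g_j} is the parity-swap unitary. -/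
/-!
Entrywise, `𝐔 (f ⊗ 1) 𝐔†` has `((a, s), (b, t))` entry `f (c / a) (c / b) · U_S(a / b)_{st}` with
`c = g_j g_i`, whereas `(Y ⊗ Z)† (f ⊗ 1) (Y ⊗ Z) = (Y† f Y) ⊗ 1` is a multiple of the identity in
every `G`-block. For `a ≠ b` an equality therefore makes `f (c / a) (c / b) · U_S(a / b)` a scalar,
which forces `f (c / a) (c / b) = 0` since `U_S(a / b)` is not one. Conversely, if `f` is diagonal
only the blocks `a = b` survive, where `U_S(1) = 1`, so `𝐔 (f ⊗ 1) 𝐔† = (P f P†) ⊗ 1`; `Y = P†`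
then witnesses invariance.
-/

open Matrix Kronecker

variable {G : Type*} [Fintype G] [CommGroup G] [DecidableEq G] {n : ℕ}

/-- The parity-swap unitary `P^{g_i,g_j} = Σ_g |g_i g⟩⟨g_j g⁻¹|` on `ℂ^G`. -/
noncomputable def Pswap (gi gj : G) : Matrix G G ℂ :=
  ∑ g : G, Matrix.single (gi * g) (gj * g⁻¹) (1 : ℂ)

theorem eq_zero_of_smul_eq_smul_of_not_exists {K M : Type*} [GroupWithZero K] [MulAction K M]
    {v w : M} (hv : ¬∃ c : K, v = c • w) {x y : K} (h : x • v = y • w) : x = 0 := by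
  by_contra hx
  exact hv ⟨x⁻¹ * y, by rw [mul_smul, ← h, inv_smul_smul₀ hx]⟩

namespace Matrix

theorem kronecker_one_inj {ι κ m R : Type*} [MulZeroOneClass R] [DecidableEq m] [Nonempty m]
    {A B : Matrix ι κ R} : A ⊗ₖ (1 : Matrix m m R) = B ⊗ₖ 1 ↔ A = B := by
  refine ⟨fun h => ?_, congrArg (· ⊗ₖ 1)⟩
  ext a b
  obtain ⟨s⟩ := ‹Nonempty m›
  simpa using congrFun (congrFun h (a, s)) (b, s)

theorem conjTranspose_kronecker_mul_kronecker_one_mul {ι κ m R : Type*} [Fintype ι]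
    [Fintype m] [DecidableEq m] [CommSemiring R] [StarRing R]
    (Y : Matrix ι κ R) (Z : Matrix m m R) (hZ : Zᴴ * Z = 1) (f : Matrix ι ι R) :
    (Y ⊗ₖ Z)ᴴ * (f ⊗ₖ (1 : Matrix m m R)) * (Y ⊗ₖ Z) = (Yᴴ * f * Y) ⊗ₖ 1 := by
  rw [conjTranspose_kronecker, ← mul_kronecker_mul, ← mul_kronecker_mul, Matrix.mul_one, hZ]

theorem mul_kronecker_one_mul_conjTranspose_apply {ι κ m m' R : Type*} [Fintype κ] [Fintype m']
    [DecidableEq κ] [DecidableEq m'] [CommSemiring R] [StarRing R]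
    {W : Matrix (ι × m) (κ × m') R} (σ : ι → κ) (V : ι → Matrix m m' R)
    (hW : ∀ a b s t, W (a, s) (b, t) = if b = σ a then V a s t else 0)
    (f : Matrix κ κ R) (a b : ι) (s t : m) :
    (W * (f ⊗ₖ (1 : Matrix m' m' R)) * Wᴴ) (a, s) (b, t) =
      f (σ a) (σ b) * (V a * (V b)ᴴ) s t := by
  have hWf : ∀ c u, (W * (f ⊗ₖ (1 : Matrix m' m' R))) (a, s) (c, u) = f (σ a) c * V a s u := by
    intro c u
    simp [mul_apply, Fintype.sum_prod_type, hW, one_apply, mul_ite, mul_comm]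
  rw [mul_apply, Fintype.sum_prod_type, Finset.sum_comm]
  simp [hWf, hW, apply_ite star, mul_apply, Finset.mul_sum, mul_assoc, mul_left_comm]

theorem coe_mul_conjTranspose_coe {H m α : Type*} [Group H] [Fintype m] [DecidableEq m]
    [CommRing α] [StarRing α] (U : H →* unitaryGroup m α) (x y : H) :
    (U x : Matrix m m α) * (U y : Matrix m m α)ᴴ = U (x / y) := by
  rw [map_div]
  rfl

end Matrix

theorem Pswap_eq_permMatrix (gi gj : G) :
    Pswap gi gj = Equiv.Perm.permMatrix ℂ (Equiv.divLeft (gj * gi)) := by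
  ext a b
  rw [Pswap, Matrix.sum_apply, Finset.sum_eq_single (gi⁻¹ * a)]
  · simp [single_apply, PEquiv.toMatrix_apply, div_eq_mul_inv, mul_comm, mul_left_comm, mul_assoc,
      eq_comm]
  · intro g _ hg
    simp only [single_apply]
    rw [if_neg]
    rintro ⟨rfl, -⟩
    exact hg (by group)
  · simp

theorem Pswap_mem_unitaryGroup (gi gj : G) : Pswap gi gj ∈ unitaryGroup G ℂ := by
  rw [mem_unitaryGroup_iff, star_eq_conjTranspose, Pswap_eq_permMatrix, conjTranspose_permMatrix,
    ← permMatrix_mul, inv_mul_cancel, permMatrix_one]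

theorem Pswap_mul_mul_conjTranspose (gi gj : G) (f : Matrix G G ℂ) :
    Pswap gi gj * f * (Pswap gi gj)ᴴ = f.submatrix (gj * gi / ·) (gj * gi / ·) := by
  rw [Pswap_eq_permMatrix, conjTranspose_permMatrix, Equiv.Perm.permMatrix,
    PEquiv.toMatrix_toPEquiv_mul, Equiv.Perm.permMatrix, PEquiv.mul_toMatrix_toPEquiv,
    submatrix_submatrix]
  rfl

theorem Uqrf_apply (U : G →* unitaryGroup (Fin n) ℂ) (gi gj a b : G) (s t : Fin n) :
    Uqrf U gi gj (a, s) (b, t) =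
      if b = gj * gi / a then (U (a / gi) : Matrix (Fin n) (Fin n) ℂ) s t else 0 := by
  rw [Uqrf, Matrix.sum_apply, Finset.sum_eq_single (a / gi)]
  · rw [inv_div, ← mul_div_assoc, div_mul_cancel, kroneckerMap_apply, single_apply]
    simp [eq_comm]
  · intro g _ hg
    rw [kroneckerMap_apply, single_apply, if_neg, zero_mul]
    rintro ⟨rfl, -⟩
    exact hg (by simp)
  · simp

theorem Uqrf_mul_kronecker_one_mul_conjTranspose_apply (U : G →* unitaryGroup (Fin n) ℂ)
    (gi gj : G) (f : Matrix G G ℂ) (a b : G) (s t : Fin n) :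
    (Uqrf U gi gj * (f ⊗ₖ (1 : Matrix (Fin n) (Fin n) ℂ)) * (Uqrf U gi gj)ᴴ) (a, s) (b, t) =
      f (gj * gi / a) (gj * gi / b) * (U (a / b) : Matrix (Fin n) (Fin n) ℂ) s t := by
  rw [mul_kronecker_one_mul_conjTranspose_apply _ _ (Uqrf_apply U gi gj), coe_mul_conjTranspose_coe,
    div_div_div_cancel_right]

theorem Uqrf_mul_kronecker_one_mul_conjTranspose_of_isDiag (U : G →* unitaryGroup (Fin n) ℂ)
    (gi gj : G) {f : Matrix G G ℂ} (hf : f.IsDiag) :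
    Uqrf U gi gj * (f ⊗ₖ (1 : Matrix (Fin n) (Fin n) ℂ)) * (Uqrf U gi gj)ᴴ =
      (Pswap gi gj * f * (Pswap gi gj)ᴴ) ⊗ₖ 1 := by
  ext ⟨a, s⟩ ⟨b, t⟩
  rw [Uqrf_mul_kronecker_one_mul_conjTranspose_apply, Pswap_mul_mul_conjTranspose,
    kronecker_apply, submatrix_apply]
  obtain rfl | hab := eq_or_ne a b
  · rw [div_self', map_one, UnitaryGroup.one_val]
  · rw [hf ((div_right_injective (b := gj * gi)).ne hab), zero_mul, zero_mul]

theorem isDiag_of_Uqrf_mul_kronecker_one_mul_conjTranspose_eq {U : G →* unitaryGroup (Fin n) ℂ}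
    (hU : ∀ h : G, h ≠ 1 →
      ¬ ∃ c : ℂ, (U h : Matrix (Fin n) (Fin n) ℂ) = c • (1 : Matrix (Fin n) (Fin n) ℂ))
    {gi gj : G} {f K : Matrix G G ℂ}
    (h : Uqrf U gi gj * (f ⊗ₖ (1 : Matrix (Fin n) (Fin n) ℂ)) * (Uqrf U gi gj)ᴴ = K ⊗ₖ 1) :
    f.IsDiag := by
  intro g g' hne
  set c := gj * gi
  have hscalar : f g g' • (U (g' / g) : Matrix (Fin n) (Fin n) ℂ) = K (c / g) (c / g') • 1 := by
    ext s t
    have hst := congrFun (congrFun h (c / g, s)) (c / g', t)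
    rwa [Uqrf_mul_kronecker_one_mul_conjTranspose_apply, div_div_cancel, div_div_cancel,
      div_div_div_cancel_left, kronecker_apply] at hst
  exact eq_zero_of_smul_eq_smul_of_not_exists (hU _ (div_ne_one.mpr hne.symm)) hscalar

/-- TPS-invariant frame operators. Assuming no nontrivial translation acts
as a scalar, a frame-local operator `f ⊗ 1_n` is invariant up to some bilocal unitary under
some QRF transformation iff `f` is diagonal in the group basis; in that case, for any
orientations, `f ⊗ 1_n ∈ 𝒜^{Y⊗Z}` iff `Y† f Y = P f P†` (with `Z` arbitrary). -/
theorem frame_local_TPS_invariant_iff (hn : 1 ≤ n)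
    (U : G →* Matrix.unitaryGroup (Fin n) ℂ)
    (hU : ∀ h : G, h ≠ 1 →
      ¬ ∃ c : ℂ, (U h : Matrix (Fin n) (Fin n) ℂ) = c • (1 : Matrix (Fin n) (Fin n) ℂ))
    (f : Matrix G G ℂ) :
    ((∃ gi gj : G, ∃ Y ∈ Matrix.unitaryGroup G ℂ, ∃ Z ∈ Matrix.unitaryGroup (Fin n) ℂ,
        Uqrf U gi gj * (f ⊗ₖ (1 : Matrix (Fin n) (Fin n) ℂ)) * (Uqrf U gi gj)ᴴ =
          (Y ⊗ₖ Z)ᴴ * (f ⊗ₖ (1 : Matrix (Fin n) (Fin n) ℂ)) * (Y ⊗ₖ Z)) ↔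
      (∀ g g' : G, g ≠ g' → f g g' = 0)) ∧
    ((∀ g g' : G, g ≠ g' → f g g' = 0) →
      ∀ gi gj : G, ∀ Y ∈ Matrix.unitaryGroup G ℂ, ∀ Z ∈ Matrix.unitaryGroup (Fin n) ℂ,
        (Uqrf U gi gj * (f ⊗ₖ (1 : Matrix (Fin n) (Fin n) ℂ)) * (Uqrf U gi gj)ᴴ =
            (Y ⊗ₖ Z)ᴴ * (f ⊗ₖ (1 : Matrix (Fin n) (Fin n) ℂ)) * (Y ⊗ₖ Z)) ↔
          Yᴴ * f * Y = Pswap gi gj * f * (Pswap gi gj)ᴴ) := by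
  have : Nonempty (Fin n) := ⟨⟨0, hn⟩⟩
  have conj_bilocal : ∀ Y, ∀ Z ∈ unitaryGroup (Fin n) ℂ,
      (Y ⊗ₖ Z)ᴴ * (f ⊗ₖ (1 : Matrix (Fin n) (Fin n) ℂ)) * (Y ⊗ₖ Z) = (Yᴴ * f * Y) ⊗ₖ 1 :=
    fun Y Z hZ => conjTranspose_kronecker_mul_kronecker_one_mul Y Z (mem_unitaryGroup_iff'.mp hZ) f
  have of_isDiag : f.IsDiag → ∀ gi gj : G, ∀ Y ∈ unitaryGroup G ℂ, ∀ Z ∈ unitaryGroup (Fin n) ℂ,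
      (Uqrf U gi gj * (f ⊗ₖ (1 : Matrix (Fin n) (Fin n) ℂ)) * (Uqrf U gi gj)ᴴ =
          (Y ⊗ₖ Z)ᴴ * (f ⊗ₖ (1 : Matrix (Fin n) (Fin n) ℂ)) * (Y ⊗ₖ Z)) ↔
        Yᴴ * f * Y = Pswap gi gj * f * (Pswap gi gj)ᴴ := by
    intro hf gi gj Y _ Z hZ
    rw [Uqrf_mul_kronecker_one_mul_conjTranspose_of_isDiag U gi gj hf, conj_bilocal Y Z hZ,
      kronecker_one_inj, eq_comm]
  refine ⟨⟨?_, fun hf => ?_⟩, of_isDiag⟩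
  · rintro ⟨gi, gj, Y, -, Z, hZ, h⟩
    exact isDiag_of_Uqrf_mul_kronecker_one_mul_conjTranspose_eq hU (h.trans (conj_bilocal Y Z hZ))
  · have hP : (Pswap (1 : G) 1)ᴴ ∈ unitaryGroup G ℂ := Unitary.star_mem (Pswap_mem_unitaryGroup 1 1)
    refine ⟨1, 1, (Pswap 1 1)ᴴ, hP, 1, one_mem _, ?_⟩
    exact (of_isDiag hf 1 1 _ hP 1 (one_mem _)).mpr (by rw [conjTranspose_conjTranspose])
end

section
/- If there exists h ∈ G such that U_S(h) is not a complex scalar multiple of the identity 1_n, then for any frame orientations g_i, g_j ∈ G the QRF-transformation unitary 𝐔 = 𝐔^{g_i,g_j} is not a Kronecker product of local unitaries: there exist no unitaries Y on ℂ^G and Z on ℂ^n with 𝐔 = Y ⊗ Z. (This expresses the inequivalence of the tensor product structures associated with the two quantum reference frames.) -/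
open Matrix Kronecker

variable {G : Type*} [Fintype G] [CommGroup G] [DecidableEq G] {n : ℕ}

/-!
The block of `𝐔^{g_i,g_j}` in position `(g g_i, g_j g⁻¹)` is `U_S(g)`, while every block of
`Y ⊗ Z` is a multiple of `Z`. The block at `g = e` gives `1 = c • Z`, so `Z`, and with it every
`U_S(g)`, is a scalar matrix.
-/

theorem exists_smul_eq_smul_one_of_smul_eq_one {K A : Type*} [Field K] [Ring A] [Algebra K A]
    {c : K} {z : A} (hz : c • z = 1) (d : K) : ∃ k : K, d • z = k • (1 : A) := by
  by_cases hc : c = 0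
  -- then `1 = 0` in `A` (for matrices: `n = 0`)
  · have : Subsingleton A := subsingleton_of_zero_eq_one (by simpa [hc] using hz)
    exact ⟨0, Subsingleton.elim _ _⟩
  · refine ⟨d * c⁻¹, ?_⟩
    rw [← hz, smul_smul, mul_assoc, inv_mul_cancel₀ hc, mul_one]

theorem kronecker_submatrix_prodMk {l m p q R : Type*} [Mul R]
    (Y : Matrix l m R) (Z : Matrix p q R) (i : l) (j : m) :
    (Y ⊗ₖ Z).submatrix (Prod.mk i) (Prod.mk j) = Y i j • Z := by
  ext; rfl

theorem Uqrf_submatrix_prodMk (U : G →* Matrix.unitaryGroup (Fin n) ℂ) (gi gj g : G) :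
    (Uqrf U gi gj).submatrix (Prod.mk (g * gi)) (Prod.mk (gj * g⁻¹))
      = (U g : Matrix (Fin n) (Fin n) ℂ) := by
  ext p q
  simp [Uqrf, Matrix.sum_apply, single_apply]

theorem Uqrf_not_bilocal_general
    (U : G →* Matrix.unitaryGroup (Fin n) ℂ)
    (hU : ∃ h : G,
      ¬ ∃ c : ℂ, (U h : Matrix (Fin n) (Fin n) ℂ) = c • (1 : Matrix (Fin n) (Fin n) ℂ)) :
    ∀ gi gj : G,
      ¬ ∃ Y ∈ Matrix.unitaryGroup G ℂ, ∃ Z ∈ Matrix.unitaryGroup (Fin n) ℂ,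
        Uqrf U gi gj = Y ⊗ₖ Z := by
  obtain ⟨h, hh⟩ := hU
  rintro gi gj ⟨Y, -, Z, -, hYZ⟩
  have hblock : ∀ g, (U g : Matrix (Fin n) (Fin n) ℂ) = Y (g * gi) (gj * g⁻¹) • Z := fun g => by
    rw [← Uqrf_submatrix_prodMk, hYZ, kronecker_submatrix_prodMk]
  have hone : Y (1 * gi) (gj * 1⁻¹) • Z = 1 := by
    rw [← hblock, map_one, OneMemClass.coe_one]
  exact hh (hblock h ▸ exists_smul_eq_smul_one_of_smul_eq_one hone _)

/-- inequivalence of the natural TPSs of the two QRF perspectives.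
If some translation `U_S(h)` is not a scalar multiple of the identity, then the
QRF-change unitary `𝐔^{g_i,g_j}` is not a Kronecker product of local unitaries. -/
theorem Uqrf_not_bilocal (hn : 1 ≤ n)
    (U : G →* Matrix.unitaryGroup (Fin n) ℂ)
    (hU : ∃ h : G,
      ¬ ∃ c : ℂ, (U h : Matrix (Fin n) (Fin n) ℂ) = c • (1 : Matrix (Fin n) (Fin n) ℂ)) :
    ∀ gi gj : G,
      ¬ ∃ Y ∈ Matrix.unitaryGroup G ℂ, ∃ Z ∈ Matrix.unitaryGroup (Fin n) ℂ,
        Uqrf U gi gj = Y ⊗ₖ Z :=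
  Uqrf_not_bilocal_general U hU
end

section
/- The intersection of the two relational-observable algebras describing the system relative to the two frames equals the translation-invariant system operators restricted to the physical subspace: 𝒜_{S|R₁} ∩ 𝒜_{S|R₂} = { (1_G ⊗ 1_G ⊗ f_S) · Π_phys : f_S an n×n matrix with f_S U_S(g) = U_S(g) f_S for all g ∈ G }. Moreover, if there exists h ∈ G such that U_S(h) is not a complex scalar multiple of 1_n, then 𝒜_{S|R₁} ≠ 𝒜_{S|R₂}. -/
open Matrix Kronecker

variable {G : Type*} [Fintype G] [CommGroup G] [DecidableEq G] {n : ℕ}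

/-- The coherent group-averaging projector
`Π_phys = |G|⁻¹ Σ_g L_g ⊗ L_g ⊗ U_S(g)` on `ℂ^G ⊗ ℂ^G ⊗ ℂ^n`. -/
noncomputable def Piphys (U : G →* Matrix.unitaryGroup (Fin n) ℂ) :
    Matrix (G × G × Fin n) (G × G × Fin n) ℂ :=
  (Fintype.card G : ℂ)⁻¹ •
    ∑ g : G, Lmat g ⊗ₖ (Lmat g ⊗ₖ (U g : Matrix (Fin n) (Fin n) ℂ))

/-- The algebra of relational observables describing `S` relative to frame `R₁` in
orientation `g₁` : `O_{f_S|R₁} = |G| Π_phys (|g₁⟩⟨g₁| ⊗ 1_G ⊗ f_S) Π_phys`. -/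
noncomputable def relAlgS1 (U : G →* Matrix.unitaryGroup (Fin n) ℂ) (g1 : G) :
    Set (Matrix (G × G × Fin n) (G × G × Fin n) ℂ) :=
  Set.range fun fS : Matrix (Fin n) (Fin n) ℂ =>
    (Fintype.card G : ℂ) •
      (Piphys U * (Matrix.single g1 g1 (1 : ℂ) ⊗ₖ ((1 : Matrix G G ℂ) ⊗ₖ fS)) *
        Piphys U)

/-- The algebra of relational observables describing `S` relative to frame `R₂` in
orientation `g₂` : `O_{f_S|R₂} = |G| Π_phys (1_G ⊗ |g₂⟩⟨g₂| ⊗ f_S) Π_phys`. -/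
noncomputable def relAlgS2 (U : G →* Matrix.unitaryGroup (Fin n) ℂ) (g2 : G) :
    Set (Matrix (G × G × Fin n) (G × G × Fin n) ℂ) :=
  Set.range fun fS : Matrix (Fin n) (Fin n) ℂ =>
    (Fintype.card G : ℂ) •
      (Piphys U * ((1 : Matrix G G ℂ) ⊗ₖ (Matrix.single g2 g2 (1 : ℂ) ⊗ₖ fS)) *
        Piphys U)


/-!
The `((a, b), (c, d))` block of `Π_phys` is `|G|⁻¹ U(a c⁻¹)` when `a⁻¹ b = c⁻¹ d` and `0`
otherwise: `Π_phys` only sees the relative orientation of the two frames. Hence a frame-diagonal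
operator sandwiched between two copies of `Π_phys` has explicit blocks: up to `|G|⁻¹`, those of
`O_{f|R₁}` are `U(a g₁⁻¹) f U(g₁ c⁻¹)` and those of `O_{f'|R₂}` are `U(b g₂⁻¹) f' U(g₂ d⁻¹)`.
Comparing one block of each shows that `O_{f|R₁} = O_{f'|R₂}` forces `U(g) f = f' U(g)` for all
`g`, i.e. `f = f'` commutes with `U`; conversely, for such `f` both observables are
`(1 ⊗ 1 ⊗ f) Π_phys`. If the two algebras were equal, every `f` would commute with every `U(h)`,
so each `U(h)` would be scalar.
-/

lemma mul_kronecker_diagonal_apply {R k l m ι : Type*} [CommSemiring R] [Fintype k] [Fintype l]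
    [Fintype m] [DecidableEq k] [DecidableEq l] (M : Matrix ι (k × l × m) R) (α : k → R)
    (β : l → R) (f : Matrix m m R) (p : ι) (r : k) (s : l) (j : m) :
    (M * (diagonal α ⊗ₖ (diagonal β ⊗ₖ f))) p (r, s, j) =
      α r * β s * ∑ x, M p (r, s, x) * f x j := by
  simp only [mul_apply, Fintype.sum_prod_type, kroneckerMap_apply, diagonal_apply, ite_mul,
    zero_mul, mul_ite, mul_zero, Finset.sum_ite_irrel, Finset.sum_const_zero, Finset.sum_ite_eq',
    Finset.mem_univ, if_true, Finset.mul_sum]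
  exact Finset.sum_congr rfl fun x _ => by ring

lemma one_kronecker_one_kronecker_mul_apply {R k l m ι : Type*} [CommSemiring R] [Fintype k]
    [Fintype l] [Fintype m] [DecidableEq k] [DecidableEq l] (f : Matrix m m R)
    (M : Matrix (k × l × m) ι R) (r : k) (s : l) (i : m) (q : ι) :
    (((1 : Matrix k k R) ⊗ₖ ((1 : Matrix l l R) ⊗ₖ f)) * M) (r, s, i) q =
      ∑ x, f i x * M (r, s, x) q := by
  simp only [mul_apply, Fintype.sum_prod_type, kroneckerMap_apply, one_apply, ite_mul, one_mul,
    zero_mul, Finset.sum_ite_irrel, Finset.sum_const_zero, Finset.sum_ite_eq, Finset.mem_univ,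
    if_true]

lemma Matrix.exists_eq_smul_one_of_forall_commute {R m : Type*} [CommSemiring R] [Fintype m]
    [DecidableEq m] {M : Matrix m m R} (hM : ∀ A, Commute A M) : ∃ c : R, M = c • 1 := by
  obtain ⟨c, hc⟩ : M ∈ Set.range (scalar m) := by
    rw [← Matrix.center_eq_range, Semigroup.mem_center_iff]
    exact fun A => (hM A).eq
  exact ⟨c, by rw [← hc, scalar_apply, smul_one_eq_diagonal]⟩

lemma mul_mul_eq_of_commute {H : Type*} [Monoid H] {V : H →* Matrix.unitaryGroup (Fin n) ℂ}
    {f : Matrix (Fin n) (Fin n) ℂ} {x : H} (hx : Commute f (V x)) (y : H) :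
    (V x : Matrix (Fin n) (Fin n) ℂ) * f * (V y : Matrix (Fin n) (Fin n) ℂ) =
      f * (V (x * y) : Matrix (Fin n) (Fin n) ℂ) := by
  rw [← hx.eq, mul_assoc, map_mul, Submonoid.coe_mul]

section

variable (U : G →* Matrix.unitaryGroup (Fin n) ℂ)

lemma Piphys_apply (a b c d : G) (i j : Fin n) :
    Piphys U (a, b, i) (c, d, j) =
      (Fintype.card G : ℂ)⁻¹ *
        if a⁻¹ * b = c⁻¹ * d then (U (a * c⁻¹) : Matrix (Fin n) (Fin n) ℂ) i j else 0 := by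
  have hsupp : ∀ g : G, (a = g * c ∧ b = g * d) ↔ (g = a * c⁻¹ ∧ a⁻¹ * b = c⁻¹ * d) := by
    refine fun g => ⟨?_, ?_⟩
    · rintro ⟨rfl, rfl⟩
      constructor <;> group
    · rintro ⟨rfl, h⟩
      exact ⟨by group, by rw [mul_assoc, ← h]; group⟩
  simp only [Piphys, Lmat, Matrix.smul_apply, Matrix.sum_apply, kroneckerMap_apply, of_apply,
    smul_eq_mul, ite_mul, one_mul, zero_mul, ← ite_and, hsupp]
  rw [Finset.sum_congr rfl fun g _ => ite_and .., Finset.sum_ite_eq']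
  simp

lemma Piphys_mul_kronecker_mul_Piphys_apply (α β : G → ℂ) (f : Matrix (Fin n) (Fin n) ℂ)
    (a b c d : G) (i j : Fin n) :
    (Piphys U * (diagonal α ⊗ₖ (diagonal β ⊗ₖ f)) * Piphys U) (a, b, i) (c, d, j) =
      (Fintype.card G : ℂ)⁻¹ ^ 2 *
        if a⁻¹ * b = c⁻¹ * d then
          ∑ r, α r * β (r * (a⁻¹ * b)) *
            ((U (a * r⁻¹) : Matrix (Fin n) (Fin n) ℂ) * f *
              (U (r * c⁻¹) : Matrix (Fin n) (Fin n) ℂ)) i j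
        else 0 := by
  simp only [mul_apply (M := _ * _), Fintype.sum_prod_type, mul_kronecker_diagonal_apply,
    Piphys_apply]
  conv_lhs =>
    simp only [inv_mul_eq_iff_eq_mul, mul_ite, ite_mul, mul_zero, zero_mul, Finset.sum_ite_irrel,
      Finset.sum_const_zero, Finset.sum_ite_eq', Finset.mem_univ, if_true, inv_mul_cancel_left]
  by_cases h : a⁻¹ * b = c⁻¹ * d
  · rw [if_pos (inv_mul_eq_iff_eq_mul.mp h), if_pos h, ← h, Finset.mul_sum]
    refine Finset.sum_congr rfl fun r _ => ?_
    simp only [mul_apply, Finset.mul_sum, Finset.sum_mul]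
    exact Finset.sum_congr rfl fun l _ => Finset.sum_congr rfl fun m _ => by ring
  · rw [if_neg (mt inv_mul_eq_iff_eq_mul.mpr h), if_neg h, mul_zero]

lemma card_smul_Piphys_mul_kronecker_mul_Piphys_apply (α β : G → ℂ)
    (f : Matrix (Fin n) (Fin n) ℂ) (a b c d : G) (i j : Fin n) :
    ((Fintype.card G : ℂ) • (Piphys U * (diagonal α ⊗ₖ (diagonal β ⊗ₖ f)) * Piphys U))
        (a, b, i) (c, d, j) =
      (Fintype.card G : ℂ)⁻¹ *
        if a⁻¹ * b = c⁻¹ * d then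
          ∑ r, α r * β (r * (a⁻¹ * b)) *
            ((U (a * r⁻¹) : Matrix (Fin n) (Fin n) ℂ) * f *
              (U (r * c⁻¹) : Matrix (Fin n) (Fin n) ℂ)) i j
        else 0 := by
  have hG : (Fintype.card G : ℂ) ≠ 0 := Nat.cast_ne_zero.mpr Fintype.card_ne_zero
  rw [Matrix.smul_apply, Piphys_mul_kronecker_mul_Piphys_apply, smul_eq_mul, ← mul_assoc]
  congr 1
  field_simp

lemma one_kronecker_one_kronecker_mul_Piphys_apply (f : Matrix (Fin n) (Fin n) ℂ)
    (a b c d : G) (i j : Fin n) :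
    (((1 : Matrix G G ℂ) ⊗ₖ ((1 : Matrix G G ℂ) ⊗ₖ f)) * Piphys U) (a, b, i) (c, d, j) =
      (Fintype.card G : ℂ)⁻¹ *
        if a⁻¹ * b = c⁻¹ * d then (f * (U (a * c⁻¹) : Matrix (Fin n) (Fin n) ℂ)) i j
        else 0 := by
  rw [one_kronecker_one_kronecker_mul_apply]
  simp only [Piphys_apply, mul_ite, mul_zero, Finset.sum_ite_irrel, Finset.sum_const_zero,
    mul_apply, Finset.mul_sum]
  exact if_congr Iff.rfl (Finset.sum_congr rfl fun x _ => by ring) rfl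

noncomputable def relObs1 (g1 : G) (f : Matrix (Fin n) (Fin n) ℂ) :
    Matrix (G × G × Fin n) (G × G × Fin n) ℂ :=
  (Fintype.card G : ℂ) •
    (Piphys U * (Matrix.single g1 g1 (1 : ℂ) ⊗ₖ ((1 : Matrix G G ℂ) ⊗ₖ f)) * Piphys U)

noncomputable def relObs2 (g2 : G) (f : Matrix (Fin n) (Fin n) ℂ) :
    Matrix (G × G × Fin n) (G × G × Fin n) ℂ :=
  (Fintype.card G : ℂ) •
    (Piphys U * ((1 : Matrix G G ℂ) ⊗ₖ (Matrix.single g2 g2 (1 : ℂ) ⊗ₖ f)) * Piphys U)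

lemma relObs1_apply (g1 : G) (f : Matrix (Fin n) (Fin n) ℂ) (a b c d : G) (i j : Fin n) :
    relObs1 U g1 f (a, b, i) (c, d, j) =
      (Fintype.card G : ℂ)⁻¹ *
        if a⁻¹ * b = c⁻¹ * d then
          ((U (a * g1⁻¹) : Matrix (Fin n) (Fin n) ℂ) * f *
            (U (g1 * c⁻¹) : Matrix (Fin n) (Fin n) ℂ)) i j
        else 0 := by
  rw [relObs1, ← diagonal_single, ← diagonal_one, card_smul_Piphys_mul_kronecker_mul_Piphys_apply]
  simp only [Pi.single_apply, ite_mul, one_mul, zero_mul, Finset.sum_ite_eq', Finset.mem_univ,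
    if_true]

lemma relObs2_apply (g2 : G) (f : Matrix (Fin n) (Fin n) ℂ) (a b c d : G) (i j : Fin n) :
    relObs2 U g2 f (a, b, i) (c, d, j) =
      (Fintype.card G : ℂ)⁻¹ *
        if a⁻¹ * b = c⁻¹ * d then
          ((U (b * g2⁻¹) : Matrix (Fin n) (Fin n) ℂ) * f *
            (U (g2 * d⁻¹) : Matrix (Fin n) (Fin n) ℂ)) i j
        else 0 := by
  rw [relObs2, ← diagonal_single, ← diagonal_one, card_smul_Piphys_mul_kronecker_mul_Piphys_apply]
  refine congrArg _ (if_ctx_congr Iff.rfl (fun h => ?_) fun _ => rfl)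
  simp only [Pi.single_apply, ← eq_mul_inv_iff_mul_eq, ite_mul, one_mul, zero_mul,
    Finset.sum_ite_eq', Finset.mem_univ, if_true]
  rw [show a * (g2 * (a⁻¹ * b)⁻¹)⁻¹ = b * g2⁻¹ by group, h,
    show g2 * (c⁻¹ * d)⁻¹ * c⁻¹ = g2 * d⁻¹ by group]

variable {U}

lemma relObs1_eq_of_commute (g1 : G) {f : Matrix (Fin n) (Fin n) ℂ}
    (hf : ∀ g, Commute f (U g)) :
    relObs1 U g1 f = ((1 : Matrix G G ℂ) ⊗ₖ ((1 : Matrix G G ℂ) ⊗ₖ f)) * Piphys U := by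
  ext ⟨a, b, i⟩ ⟨c, d, j⟩
  rw [relObs1_apply, one_kronecker_one_kronecker_mul_Piphys_apply, mul_mul_eq_of_commute (hf _),
    mul_assoc a, inv_mul_cancel_left]

lemma relObs2_eq_of_commute (g2 : G) {f : Matrix (Fin n) (Fin n) ℂ}
    (hf : ∀ g, Commute f (U g)) :
    relObs2 U g2 f = ((1 : Matrix G G ℂ) ⊗ₖ ((1 : Matrix G G ℂ) ⊗ₖ f)) * Piphys U := by
  ext ⟨a, b, i⟩ ⟨c, d, j⟩
  rw [relObs2_apply, one_kronecker_one_kronecker_mul_Piphys_apply, mul_mul_eq_of_commute (hf _)]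
  refine congrArg _ (if_ctx_congr Iff.rfl (fun h => ?_) fun _ => rfl)
  rw [mul_assoc b, inv_mul_cancel_left, inv_mul_eq_iff_eq_mul.mp h]
  group

lemma mul_eq_mul_of_relObs1_eq_relObs2 {g1 g2 : G} {f f' : Matrix (Fin n) (Fin n) ℂ}
    (h : relObs1 U g1 f = relObs2 U g2 f') (g : G) :
    (U g : Matrix (Fin n) (Fin n) ℂ) * f = f' * (U g : Matrix (Fin n) (Fin n) ℂ) := by
  have hG : (Fintype.card G : ℂ)⁻¹ ≠ 0 := inv_ne_zero (Nat.cast_ne_zero.mpr Fintype.card_ne_zero)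
  have hcond : (g * g1)⁻¹ * g2 = g1⁻¹ * (g⁻¹ * g2) := by group
  ext i j
  have hij := congrFun (congrFun h (g * g1, g2, i)) (g1, g⁻¹ * g2, j)
  rw [relObs1_apply, relObs2_apply, if_pos hcond, if_pos hcond, mul_inv_cancel_right,
    mul_inv_cancel, mul_inv_cancel, show g2 * (g⁻¹ * g2)⁻¹ = g by group, map_one,
    OneMemClass.coe_one, mul_one, one_mul] at hij
  exact mul_left_cancel₀ hG hij

lemma relObs1_eq_relObs2_iff {g1 g2 : G} {f f' : Matrix (Fin n) (Fin n) ℂ} :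
    relObs1 U g1 f = relObs2 U g2 f' ↔ f = f' ∧ ∀ g, Commute f (U g) := by
  refine ⟨fun h => ?_, ?_⟩
  · obtain rfl : f = f' := by simpa using mul_eq_mul_of_relObs1_eq_relObs2 h 1
    exact ⟨rfl, fun g => (mul_eq_mul_of_relObs1_eq_relObs2 h g).symm⟩
  · rintro ⟨rfl, hf⟩
    rw [relObs1_eq_of_commute g1 hf, relObs2_eq_of_commute g2 hf]

end

theorem relational_S_algebras_overlap_general
    (U : G →* Matrix.unitaryGroup (Fin n) ℂ) (g1 g2 : G) :
    (relAlgS1 U g1 ∩ relAlgS2 U g2 =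
      {M : Matrix (G × G × Fin n) (G × G × Fin n) ℂ |
        ∃ fS : Matrix (Fin n) (Fin n) ℂ,
          (∀ g : G, fS * (U g : Matrix (Fin n) (Fin n) ℂ) =
            (U g : Matrix (Fin n) (Fin n) ℂ) * fS) ∧
          M = ((1 : Matrix G G ℂ) ⊗ₖ ((1 : Matrix G G ℂ) ⊗ₖ fS)) * Piphys U}) ∧
    ((∃ h : G,
        ¬ ∃ c : ℂ, (U h : Matrix (Fin n) (Fin n) ℂ) = c • (1 : Matrix (Fin n) (Fin n) ℂ)) →
      relAlgS1 U g1 ≠ relAlgS2 U g2) := by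
  refine ⟨Set.ext fun M => ⟨?_, ?_⟩, ?_⟩
  · rintro ⟨⟨f, rfl⟩, ⟨f', hf'⟩⟩
    obtain ⟨-, hf⟩ := relObs1_eq_relObs2_iff.mp hf'.symm
    exact ⟨f, hf, relObs1_eq_of_commute g1 hf⟩
  · rintro ⟨f, hf, rfl⟩
    exact ⟨⟨f, relObs1_eq_of_commute g1 hf⟩, ⟨f, relObs2_eq_of_commute g2 hf⟩⟩
  · rintro ⟨h, hh⟩ heq
    refine hh (Matrix.exists_eq_smul_one_of_forall_commute fun f => ?_)
    obtain ⟨f', hf'⟩ : relObs1 U g1 f ∈ relAlgS2 U g2 := heq ▸ ⟨f, rfl⟩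
    exact (relObs1_eq_relObs2_iff.mp hf'.symm).2 h

/-- quantum relativity of subsystems. The overlap of the relational
system algebras relative to the two frames consists exactly of the translation-invariant
system operators restricted to the physical subspace; and the two algebras are distinct
whenever some `U_S(h)` is not a scalar. -/
theorem relational_S_algebras_overlap (hn : 1 ≤ n)
    (U : G →* Matrix.unitaryGroup (Fin n) ℂ) (g1 g2 : G) :
    (relAlgS1 U g1 ∩ relAlgS2 U g2 =
      {M : Matrix (G × G × Fin n) (G × G × Fin n) ℂ |
        ∃ fS : Matrix (Fin n) (Fin n) ℂ,
          (∀ g : G, fS * (U g : Matrix (Fin n) (Fin n) ℂ) =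
            (U g : Matrix (Fin n) (Fin n) ℂ) * fS) ∧
          M = ((1 : Matrix G G ℂ) ⊗ₖ ((1 : Matrix G G ℂ) ⊗ₖ fS)) * Piphys U}) ∧
    ((∃ h : G,
        ¬ ∃ c : ℂ, (U h : Matrix (Fin n) (Fin n) ℂ) = c • (1 : Matrix (Fin n) (Fin n) ℂ)) →
      relAlgS1 U g1 ≠ relAlgS2 U g2) :=
  relational_S_algebras_overlap_general U g1 g2
end

section
/- Let ρ be a density matrix on ℂ^G ⊗ ℂ^n, fix frame orientations g_i, g_j ∈ G and a unitary Z on ℂ^n. Suppose ρ admits a decomposition ρ = Σ_{A=1}^N p_A ρ_A with p_A > 0, Σ_A p_A = 1, each ρ_A a pure density matrix, such that for each A there exists a unitary Y_A on ℂ^G with 𝐔 ρ_A 𝐔† = (Y_A ⊗ Z)† ρ_A (Y_A ⊗ Z). Then Tr_F(𝐔 ρ 𝐔†) = Z† Tr_F(ρ) Z; in particular S_α(Tr_F(𝐔 ρ 𝐔†)) = S_α(Tr_F(ρ)) for all α ∈ (0,1) ∪ (1,∞). -/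
open Matrix Kronecker
open scoped ComplexOrder

variable {G : Type*} [Fintype G] [CommGroup G] [DecidableEq G] {n : ℕ}

/-- The partial trace over the frame factor `ℂ^G`. -/
noncomputable def trF (ρ : Matrix (G × Fin n) (G × Fin n) ℂ) :
    Matrix (Fin n) (Fin n) ℂ :=
  Matrix.of fun s t => ∑ g : G, ρ (g, s) (g, t)

/-- The `α`-Rényi entropy `S_α(σ) = (1-α)⁻¹ log Tr(σ^α)`, where `σ^α` is obtained by
applying `t ↦ t^α` (with `0^α = 0`) to the eigenvalues of a Hermitian `σ`. -/
noncomputable def renyiEntropy {m : Type*} [Fintype m] [DecidableEq m]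
    (σ : Matrix m m ℂ) (α : ℝ) : ℝ :=
  if h : σ.IsHermitian then (1 - α)⁻¹ * Real.log (∑ i, h.eigenvalues i ^ α) else 0

/-!
Both sides of the identity for the reduced state are linear in `ρ`, so it suffices to prove it for
each component `ρ_A`. There `𝐔 ρ_A 𝐔† = (Y_A ⊗ Z)† ρ_A (Y_A ⊗ Z)`; the partial trace over the
frame is cyclic in operators acting on the frame alone, which cancels `Y_A`, while `Z` factors out.
Rényi entropies only see the spectrum, which unitary conjugation preserves.
-/

section PartialTrace

variable {G : Type*} [Fintype G] {n : ℕ}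

lemma trF_sum {ι : Type*} (s : Finset ι) (f : ι → Matrix (G × Fin n) (G × Fin n) ℂ) :
    trF (∑ i ∈ s, f i) = ∑ i ∈ s, trF (f i) := by
  ext a b
  simp only [trF, of_apply, Matrix.sum_apply]
  exact Finset.sum_comm

lemma trF_smul (c : ℂ) (M : Matrix (G × Fin n) (G × Fin n) ℂ) :
    trF (c • M) = c • trF M := by
  ext a b
  simp [trF, Finset.mul_sum]

lemma trF_one_kronecker_mul [DecidableEq G] (B : Matrix (Fin n) (Fin n) ℂ)
    (M : Matrix (G × Fin n) (G × Fin n) ℂ) :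
    trF (((1 : Matrix G G ℂ) ⊗ₖ B) * M) = B * trF M := by
  ext a b
  simp only [trF, Matrix.mul_apply, kroneckerMap_apply, one_apply, ite_mul, one_mul, zero_mul,
    Fintype.sum_prod_type, Finset.sum_ite_irrel, Finset.sum_const_zero, Finset.sum_ite_eq,
    Finset.mem_univ, if_true, of_apply, Finset.mul_sum]
  exact Finset.sum_comm

lemma trF_mul_one_kronecker [DecidableEq G] (B : Matrix (Fin n) (Fin n) ℂ)
    (M : Matrix (G × Fin n) (G × Fin n) ℂ) :
    trF (M * ((1 : Matrix G G ℂ) ⊗ₖ B)) = trF M * B := by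
  ext a b
  simp only [trF, Matrix.mul_apply, kroneckerMap_apply, one_apply, ite_mul, one_mul, zero_mul,
    mul_ite, mul_zero, Fintype.sum_prod_type, Finset.sum_ite_irrel, Finset.sum_const_zero,
    Finset.sum_ite_eq', Finset.mem_univ, if_true, of_apply, Finset.sum_mul]
  exact Finset.sum_comm

lemma trF_kronecker_one_mul_comm (A : Matrix G G ℂ) (M : Matrix (G × Fin n) (G × Fin n) ℂ) :
    trF ((A ⊗ₖ (1 : Matrix (Fin n) (Fin n) ℂ)) * M) =
      trF (M * (A ⊗ₖ (1 : Matrix (Fin n) (Fin n) ℂ))) := by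
  ext a b
  simp only [trF, Matrix.mul_apply, kroneckerMap_apply, one_apply, mul_ite, mul_one, mul_zero,
    ite_mul, zero_mul, Fintype.sum_prod_type, Finset.sum_ite_eq, Finset.mem_univ, if_true,
    of_apply, Finset.sum_ite_eq']
  rw [Finset.sum_comm]
  simp only [mul_comm]

lemma trF_conjTranspose_kronecker_mul_mul [DecidableEq G] {Y : Matrix G G ℂ}
    (hY : Y ∈ unitaryGroup G ℂ) (Z : Matrix (Fin n) (Fin n) ℂ)
    (M : Matrix (G × Fin n) (G × Fin n) ℂ) :
    trF ((Y ⊗ₖ Z)ᴴ * M * (Y ⊗ₖ Z)) = Zᴴ * trF M * Z := by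
  have hYY : Y * Yᴴ = 1 := mem_unitaryGroup_iff.mp hY
  have hsplit : Y ⊗ₖ Z = (Y ⊗ₖ 1) * (1 ⊗ₖ Z) := by
    rw [← mul_kronecker_mul, Matrix.mul_one, Matrix.one_mul]
  have hsplit' : (Y ⊗ₖ Z)ᴴ = (1 ⊗ₖ Zᴴ) * (Yᴴ ⊗ₖ 1) := by
    rw [conjTranspose_kronecker, ← mul_kronecker_mul, Matrix.mul_one, Matrix.one_mul]
  calc trF ((Y ⊗ₖ Z)ᴴ * M * (Y ⊗ₖ Z))
      = trF ((1 ⊗ₖ Zᴴ) * ((Yᴴ ⊗ₖ 1) * M * (Y ⊗ₖ 1)) * (1 ⊗ₖ Z)) := by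
        rw [hsplit', hsplit]
        simp only [Matrix.mul_assoc]
    _ = Zᴴ * trF ((Yᴴ ⊗ₖ 1) * M * (Y ⊗ₖ 1)) * Z := by
        rw [trF_mul_one_kronecker, trF_one_kronecker_mul]
    _ = Zᴴ * trF (M * ((Y ⊗ₖ 1) * (Yᴴ ⊗ₖ 1))) * Z := by
        rw [Matrix.mul_assoc (Yᴴ ⊗ₖ 1), trF_kronecker_one_mul_comm, Matrix.mul_assoc M]
    _ = Zᴴ * trF M * Z := by
        rw [← mul_kronecker_mul, hYY, Matrix.one_mul, one_kronecker_one, Matrix.mul_one]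

end PartialTrace

lemma renyiEntropy_conjTranspose_mul_mul {m : Type*} [Fintype m] [DecidableEq m]
    {Z : Matrix m m ℂ} (hZ : Z ∈ unitaryGroup m ℂ) (σ : Matrix m m ℂ) (α : ℝ) :
    renyiEntropy (Zᴴ * σ * Z) α = renyiEntropy σ α := by
  have hZZ : Z * Zᴴ = 1 := mem_unitaryGroup_iff.mp hZ
  by_cases hσ : σ.IsHermitian
  · have hσ' := isHermitian_conjTranspose_mul_mul Z hσ
    have hcharpoly : (Zᴴ * σ * Z).charpoly = σ.charpoly := by
      rw [charpoly_mul_comm, ← Matrix.mul_assoc, hZZ, Matrix.one_mul]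
    rw [renyiEntropy, renyiEntropy, dif_pos hσ, dif_pos hσ',
      (hσ'.eigenvalues_eq_eigenvalues_iff hσ).mpr hcharpoly]
  · have hσ' : ¬ (Zᴴ * σ * Z).IsHermitian := by
      refine fun h => hσ ?_
      have hback : Zᴴᴴ * (Zᴴ * σ * Z) * Zᴴ = σ := by
        simp only [conjTranspose_conjTranspose, ← Matrix.mul_assoc, hZZ, Matrix.one_mul]
        rw [Matrix.mul_assoc, hZZ, Matrix.mul_one]
      exact hback ▸ isHermitian_conjTranspose_mul_mul Zᴴ h
    rw [renyiEntropy, renyiEntropy, dif_neg hσ, dif_neg hσ']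

theorem mixed_state_reduced_states_unitarily_related_general
    (U : G →* Matrix.unitaryGroup (Fin n) ℂ) (gi gj : G)
    (ρ : Matrix (G × Fin n) (G × Fin n) ℂ)
    (Z : Matrix (Fin n) (Fin n) ℂ) (hZ : Z ∈ Matrix.unitaryGroup (Fin n) ℂ)
    (N : ℕ) (p : Fin N → ℝ) (ρA : Fin N → Matrix (G × Fin n) (G × Fin n) ℂ)
    (hdecomp : ρ = ∑ A, (p A : ℂ) • ρA A)
    (hAinv : ∀ A, ∃ Y ∈ Matrix.unitaryGroup G ℂ,
      Uqrf U gi gj * ρA A * (Uqrf U gi gj)ᴴ = (Y ⊗ₖ Z)ᴴ * ρA A * (Y ⊗ₖ Z)) :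
    trF (Uqrf U gi gj * ρ * (Uqrf U gi gj)ᴴ) = Zᴴ * trF ρ * Z ∧
      ∀ α : ℝ, α ∈ Set.Ioo (0 : ℝ) 1 ∪ Set.Ioi (1 : ℝ) →
        renyiEntropy (trF (Uqrf U gi gj * ρ * (Uqrf U gi gj)ᴴ)) α =
          renyiEntropy (trF ρ) α := by
  set V := Uqrf U gi gj
  have hcomponent : ∀ A, trF (V * ρA A * Vᴴ) = Zᴴ * trF (ρA A) * Z := fun A => by
    obtain ⟨Y, hY, hYinv⟩ := hAinv A
    rw [hYinv, trF_conjTranspose_kronecker_mul_mul hY]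
  have hreduced : trF (V * ρ * Vᴴ) = Zᴴ * trF ρ * Z := by
    simp only [hdecomp, Finset.mul_sum, Finset.sum_mul, mul_smul_comm, smul_mul_assoc, trF_sum,
      trF_smul, hcomponent]
  exact ⟨hreduced, fun α _ => by rw [hreduced, renyiEntropy_conjTranspose_mul_mul hZ]⟩

/-- mixed global states. If a density matrix `ρ` admits a pure-state
decomposition in which every pure component is invariant up to a bilocal unitary `Y_A ⊗ Z`
(with the same `Z`), then the reduced system states in the two QRF perspectives are related
by `Z`, and all `α`-Rényi entropies agree. -/
theorem mixed_state_reduced_states_unitarily_related (hn : 1 ≤ n)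
    (U : G →* Matrix.unitaryGroup (Fin n) ℂ) (gi gj : G)
    (ρ : Matrix (G × Fin n) (G × Fin n) ℂ)
    (hρ : ρ.PosSemidef) (htr : ρ.trace = 1)
    (Z : Matrix (Fin n) (Fin n) ℂ) (hZ : Z ∈ Matrix.unitaryGroup (Fin n) ℂ)
    (N : ℕ) (p : Fin N → ℝ) (ρA : Fin N → Matrix (G × Fin n) (G × Fin n) ℂ)
    (hp : ∀ A, 0 < p A) (hpsum : ∑ A, p A = 1)
    (hApure : ∀ A, (ρA A).PosSemidef ∧ (ρA A).trace = 1 ∧ ρA A * ρA A = ρA A)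
    (hdecomp : ρ = ∑ A, (p A : ℂ) • ρA A)
    (hAinv : ∀ A, ∃ Y ∈ Matrix.unitaryGroup G ℂ,
      Uqrf U gi gj * ρA A * (Uqrf U gi gj)ᴴ = (Y ⊗ₖ Z)ᴴ * ρA A * (Y ⊗ₖ Z)) :
    trF (Uqrf U gi gj * ρ * (Uqrf U gi gj)ᴴ) = Zᴴ * trF ρ * Z ∧
      ∀ α : ℝ, α ∈ Set.Ioo (0 : ℝ) 1 ∪ Set.Ioi (1 : ℝ) →
        renyiEntropy (trF (Uqrf U gi gj * ρ * (Uqrf U gi gj)ᴴ)) α =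
          renyiEntropy (trF ρ) α :=
  mixed_state_reduced_states_unitarily_related_general U gi gj ρ Z hZ N p ρA hdecomp hAinv
end

section
/- Let ρ be a pure density matrix on ℂ^G ⊗ ℂ^n that commutes with 1_G ⊗ U_S(g) for every g ∈ G, and fix frame orientations g_i, g_j ∈ G. Then there exists a function q : G → ℂ with |q(g)| = 1 for all g such that Y := Σ_{g∈G} conj(q(g)) |g⁻¹ g_j⟩⟨g_i g| is a unitary on ℂ^G and 𝐔 ρ 𝐔† = (Y ⊗ 1_n)† ρ (Y ⊗ 1_n). -/
/-!
A pure state `ρ` is a rank-one projection, so it compresses every operator to a multiple of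
itself: `ρ M ρ = tr (M ρ) • ρ`. A translation `V g = 1 ⊗ U_S(g)` commuting with `ρ` therefore
acts on it by the scalar `q(g) = tr (V g ρ)`, as `V g ρ = V g ρ ρ = ρ (V g) ρ = q(g) ρ`, and
`|q(g)| = 1` since `V g` is unitary. As `𝐔 = Σ_g (|g g_i⟩⟨g_j g⁻¹| ⊗ 1) V g`, this gives
`𝐔 ρ = (Yᴴ ⊗ 1) ρ`, and then `𝐔 ρ 𝐔ᴴ = (𝐔 ρ)(𝐔 ρ)ᴴ = (Yᴴ ⊗ 1) ρ (Y ⊗ 1)` because `ρ = ρ ρᴴ`.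
-/

open Matrix Kronecker
open scoped ComplexOrder

variable {G : Type*} [Fintype G] [CommGroup G] [DecidableEq G] {n : ℕ}

namespace Matrix

theorem sum_kronecker {ι l m p r α : Type*} [CommSemiring α] (s : Finset ι)
    (A : ι → Matrix l m α) (B : Matrix p r α) :
    (∑ i ∈ s, A i) ⊗ₖ B = ∑ i ∈ s, A i ⊗ₖ B :=
  map_sum ((kroneckerBilinear (R := α)).flip B) A s

theorem mul_mul_conjTranspose_eq_of_mul_eq {l m α : Type*} [Fintype m] [Semiring α]
    [StarRing α] {ρ : Matrix m m α} (hρ : ρᴴ = ρ) (hidem : ρ * ρ = ρ) {A : Matrix l m α}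
    {B : Matrix m l α} (h : A * ρ = Bᴴ * ρ) : A * ρ * Aᴴ = Bᴴ * ρ * B := by
  calc A * ρ * Aᴴ = A * ρ * (A * ρ)ᴴ := by
        rw [conjTranspose_mul, hρ, ← Matrix.mul_assoc, Matrix.mul_assoc A ρ ρ, hidem]
    _ = Bᴴ * ρ * (Bᴴ * ρ)ᴴ := by rw [h]
    _ = Bᴴ * ρ * B := by
        rw [conjTranspose_mul, hρ, conjTranspose_conjTranspose, ← Matrix.mul_assoc,
          Matrix.mul_assoc Bᴴ ρ ρ, hidem]

variable {m 𝕜 : Type*} [Fintype m] [DecidableEq m] [RCLike 𝕜]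

theorem sum_single_mem_unitaryGroup {ι : Type*} [Fintype ι] (σ τ : ι ≃ m) (c : ι → 𝕜)
    (hc : ∀ i, ‖c i‖ = 1) : ∑ i, single (σ i) (τ i) (c i) ∈ unitaryGroup m 𝕜 := by
  have hc' : ∀ i, star (c i) * c i = 1 := fun i => by
    rw [RCLike.star_def, RCLike.conj_mul, hc, RCLike.ofReal_one, one_pow]
  rw [mem_unitaryGroup_iff', star_eq_conjTranspose, conjTranspose_sum, Finset.sum_mul_sum]
  calc ∑ i, ∑ j, (single (σ i) (τ i) (c i))ᴴ * single (σ j) (τ j) (c j)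
      = ∑ i, single (τ i) (τ i) 1 := by
        refine Finset.sum_congr rfl fun i _ => ?_
        rw [Finset.sum_eq_single i, conjTranspose_single, single_mul_single_same, hc']
        · intro j _ hji
          rw [conjTranspose_single]
          exact single_mul_single_of_ne _ _ _ _ (σ.injective.ne hji.symm) _
        · simp
    _ = ∑ a, single a a 1 := τ.sum_comp fun a => single a a (1 : 𝕜)
    _ = 1 := sum_single_one

theorem PosSemidef.sub_inv_smul_mul_single_mul {A : Matrix m m 𝕜} (hA : A.PosSemidef) (i : m) :
    (A - (A i i)⁻¹ • (A * single i i 1 * A)).PosSemidef := by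
  set c := A i i
  set E : Matrix m m 𝕜 := single i i 1
  have hc : star c⁻¹ = c⁻¹ := by rw [star_inv₀, hA.isHermitian.apply i i]
  have hEAE : E * A * E = c • E := by simp [E, c, smul_single]
  have hB : (1 - c⁻¹ • (A * E))ᴴ = 1 - c⁻¹ • (E * A) := by
    simp [E, conjTranspose_smul, hc, hA.isHermitian.eq]
  have hAEAEA : A * E * A * E * A = c • (A * E * A) := by
    rw [show A * E * A * E * A = A * (E * A * E) * A by simp only [mul_assoc], hEAE,
      mul_smul_comm, smul_mul_assoc]
  have hBAB :
      (1 - c⁻¹ • (A * E)) * A * (1 - c⁻¹ • (A * E))ᴴ = A - c⁻¹ • (A * E * A) := by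
    have hc_cancel : c⁻¹ * c⁻¹ * c = c⁻¹ := by simpa using mul_self_mul_inv c⁻¹
    rw [hB]
    simp only [sub_mul, mul_sub, one_mul, mul_one, smul_mul_assoc, mul_smul_comm, smul_sub,
      smul_smul, ← mul_assoc, hAEAEA]
    rw [hc_cancel, sub_self, sub_zero]
  exact hBAB ▸ hA.mul_mul_conjTranspose_same _

theorem PosSemidef.mul_mul_eq_trace_mul_smul {A : Matrix m m 𝕜} (hA : A.PosSemidef)
    (htr : A.trace = 1) (hidem : A * A = A) (M : Matrix m m 𝕜) :
    A * M * A = (M * A).trace • A := by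
  obtain ⟨i, hi⟩ : ∃ i, A i i ≠ 0 := by
    by_contra! h
    simp [trace, h] at htr
  set c := A i i
  set E : Matrix m m 𝕜 := single i i 1
  have hE : ∀ X : Matrix m m 𝕜, E * X * E = X i i • E := fun X => by simp [E, smul_single]
  -- The Schur complement of `A i i` is positive semidefinite of trace `tr A - 1 = 0`.
  have hrank_one : A = c⁻¹ • (A * E * A) := by
    have htr0 : (A - c⁻¹ • (A * E * A)).trace = 0 := by
      rw [trace_sub, trace_smul, trace_mul_cycle, hidem, trace_mul_single, htr]
      simp [c, hi]
    exact sub_eq_zero.mp ((hA.sub_inv_smul_mul_single_mul i).trace_eq_zero_iff.mp htr0)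
  obtain ⟨d, hd⟩ : ∃ d : 𝕜, A * M * A = d • A := by
    refine ⟨c⁻¹ * (A * M * A) i i, ?_⟩
    calc A * M * A = (c⁻¹ * c⁻¹) • (A * (E * (A * M * A) * E) * A) := by
          conv_lhs => rw [hrank_one]
          simp only [smul_mul_assoc, mul_smul_comm, smul_smul, mul_assoc]
      _ = (c⁻¹ * (A * M * A) i i) • (c⁻¹ • (A * E * A)) := by
          rw [hE, mul_smul_comm, smul_mul_assoc, smul_smul, smul_smul]
          ring_nf
      _ = _ := by rw [← hrank_one]
  have hd_eq : d = (M * A).trace := by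
    have := congrArg trace hd
    rwa [trace_mul_cycle, hidem, trace_mul_comm, trace_smul, htr, smul_eq_mul, mul_one,
      eq_comm] at this
  rw [hd, hd_eq]

theorem PosSemidef.mul_eq_trace_mul_smul_of_commute {A V : Matrix m m 𝕜} (hA : A.PosSemidef)
    (htr : A.trace = 1) (hidem : A * A = A) (hV : V * A = A * V) :
    V * A = (V * A).trace • A :=
  calc V * A = A * V * A := by rw [← hV, mul_assoc, hidem]
    _ = _ := hA.mul_mul_eq_trace_mul_smul htr hidem V

theorem PosSemidef.norm_trace_mul_eq_one_of_commute {A V : Matrix m m 𝕜} (hA : A.PosSemidef)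
    (htr : A.trace = 1) (hidem : A * A = A) (hV : V ∈ unitaryGroup m 𝕜)
    (hVA : V * A = A * V) : ‖(V * A).trace‖ = 1 := by
  set q := (V * A).trace
  have hq : V * A = q • A := hA.mul_eq_trace_mul_smul_of_commute htr hidem hVA
  have hqA : (star q * q) • A = A :=
    calc (star q * q) • A = (V * A)ᴴ * (V * A) := by
          rw [hq, conjTranspose_smul, hA.isHermitian.eq, smul_mul_smul_comm, hidem]
      _ = A * (star V * V) * A := by
          rw [conjTranspose_mul, hA.isHermitian.eq, star_eq_conjTranspose]
          simp only [mul_assoc]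
      _ = A := by rw [mem_unitaryGroup_iff'.mp hV, mul_one, hidem]
  have hq1 : star q * q = 1 := by simpa [htr] using congrArg trace hqA
  rw [RCLike.star_def, RCLike.conj_mul] at hq1
  exact (pow_eq_one_iff_of_nonneg (norm_nonneg q) two_ne_zero).mp (by exact_mod_cast hq1)

end Matrix

theorem Uqrf_mul_eq_kronecker_mul {U : G →* unitaryGroup (Fin n) ℂ} {gi gj : G}
    {ρ : Matrix (G × Fin n) (G × Fin n) ℂ} {q : G → ℂ}
    (hq : ∀ g, (1 : Matrix G G ℂ) ⊗ₖ (U g : Matrix (Fin n) (Fin n) ℂ) * ρ = q g • ρ) :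
    Uqrf U gi gj * ρ =
      (∑ g, single (g * gi) (gj * g⁻¹) (q g)) ⊗ₖ (1 : Matrix (Fin n) (Fin n) ℂ) * ρ := by
  rw [Uqrf, sum_kronecker, Finset.sum_mul, Finset.sum_mul]
  refine Finset.sum_congr rfl fun g _ => ?_
  calc single (g * gi) (gj * g⁻¹) 1 ⊗ₖ (U g : Matrix (Fin n) (Fin n) ℂ) * ρ
      = single (g * gi) (gj * g⁻¹) 1 ⊗ₖ (1 : Matrix (Fin n) (Fin n) ℂ) *
          ((1 : Matrix G G ℂ) ⊗ₖ (U g : Matrix (Fin n) (Fin n) ℂ) * ρ) := by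
        rw [← mul_assoc, ← mul_kronecker_mul, mul_one, one_mul]
    _ = single (g * gi) (gj * g⁻¹) (q g) ⊗ₖ (1 : Matrix (Fin n) (Fin n) ℂ) * ρ := by
        rw [hq, mul_smul_comm, ← smul_mul_assoc, ← smul_kronecker, smul_single, smul_eq_mul,
          mul_one]

theorem translation_invariant_pure_state_TPS_invariant_general
    (U : G →* Matrix.unitaryGroup (Fin n) ℂ) (gi gj : G)
    (ρ : Matrix (G × Fin n) (G × Fin n) ℂ)
    (hρ : ρ.PosSemidef) (htr : ρ.trace = 1) (hpure : ρ * ρ = ρ)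
    (hcomm : ∀ g : G,
      ((1 : Matrix G G ℂ) ⊗ₖ (U g : Matrix (Fin n) (Fin n) ℂ)) * ρ =
        ρ * ((1 : Matrix G G ℂ) ⊗ₖ (U g : Matrix (Fin n) (Fin n) ℂ))) :
    ∃ q : G → ℂ, (∀ g : G, ‖q g‖ = 1) ∧
      (∑ g : G, Matrix.single (g⁻¹ * gj) (gi * g) (star (q g)))
        ∈ Matrix.unitaryGroup G ℂ ∧
      Uqrf U gi gj * ρ * (Uqrf U gi gj)ᴴ =
        ((∑ g : G, Matrix.single (g⁻¹ * gj) (gi * g) (star (q g))) ⊗ₖ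
            (1 : Matrix (Fin n) (Fin n) ℂ))ᴴ * ρ *
          ((∑ g : G, Matrix.single (g⁻¹ * gj) (gi * g) (star (q g))) ⊗ₖ
            (1 : Matrix (Fin n) (Fin n) ℂ)) := by
  set q : G → ℂ :=
    fun g => ((1 : Matrix G G ℂ) ⊗ₖ (U g : Matrix (Fin n) (Fin n) ℂ) * ρ).trace
  have hq : ∀ g, ‖q g‖ = 1 := fun g =>
    hρ.norm_trace_mul_eq_one_of_commute htr hpure
      (kronecker_mem_unitary (one_mem _) (U g).2) (hcomm g)
  refine ⟨q, hq, sum_single_mem_unitaryGroup ((Equiv.inv G).trans (Equiv.mulRight gj))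
    (Equiv.mulLeft gi) _ fun g => by rw [norm_star, hq], ?_⟩
  have hV : ∀ g,
      (1 : Matrix G G ℂ) ⊗ₖ (U g : Matrix (Fin n) (Fin n) ℂ) * ρ = q g • ρ :=
    fun g => hρ.mul_eq_trace_mul_smul_of_commute htr hpure (hcomm g)
  refine mul_mul_conjTranspose_eq_of_mul_eq hρ.isHermitian.eq hpure ?_
  rw [Uqrf_mul_eq_kronecker_mul hV, conjTranspose_kronecker, conjTranspose_one, conjTranspose_sum]
  simp only [conjTranspose_single, star_star, mul_comm]

/-- A translation-invariant pure global state is invariant, up to a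
frame-local unitary `Y ⊗ 1_n` with `Y = Σ_g conj(q(g)) |g⁻¹g_j⟩⟨g_i g|` for some phases
`q : G → ℂ`, under the QRF transformation. -/
theorem translation_invariant_pure_state_TPS_invariant (hn : 1 ≤ n)
    (U : G →* Matrix.unitaryGroup (Fin n) ℂ) (gi gj : G)
    (ρ : Matrix (G × Fin n) (G × Fin n) ℂ)
    (hρ : ρ.PosSemidef) (htr : ρ.trace = 1) (hpure : ρ * ρ = ρ)
    (hcomm : ∀ g : G,
      ((1 : Matrix G G ℂ) ⊗ₖ (U g : Matrix (Fin n) (Fin n) ℂ)) * ρ =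
        ρ * ((1 : Matrix G G ℂ) ⊗ₖ (U g : Matrix (Fin n) (Fin n) ℂ))) :
    ∃ q : G → ℂ, (∀ g : G, ‖q g‖ = 1) ∧
      (∑ g : G, Matrix.single (g⁻¹ * gj) (gi * g) (star (q g)))
        ∈ Matrix.unitaryGroup G ℂ ∧
      Uqrf U gi gj * ρ * (Uqrf U gi gj)ᴴ =
        ((∑ g : G, Matrix.single (g⁻¹ * gj) (gi * g) (star (q g))) ⊗ₖ
            (1 : Matrix (Fin n) (Fin n) ℂ))ᴴ * ρ *
          ((∑ g : G, Matrix.single (g⁻¹ * gj) (gi * g) (star (q g))) ⊗ₖ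
            (1 : Matrix (Fin n) (Fin n) ℂ)) :=
  translation_invariant_pure_state_TPS_invariant_general U gi gj ρ hρ htr hpure hcomm
end

section
/- Let A be an n×n complex matrix and fix frame orientations g_i, g_j ∈ G. Then the expectation value of A in the reduced system state is the same in both QRF perspectives for every global state, i.e. Tr(Tr_F(𝐔 ρ 𝐔†) · A) = Tr(Tr_F(ρ) · A) for every density matrix ρ on ℂ^G ⊗ ℂ^n, if and only if A commutes with U_S(g) for all g ∈ G. -/
open Matrix Kronecker
open scoped ComplexOrder

variable {G : Type*} [Fintype G] [CommGroup G] [DecidableEq G] {n : ℕ}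

/-!
Pairing the partial trace with `A` is pairing the full state with `1 ⊗ A`, so by cyclicity of
the trace the transformed expectation value is that of `𝐔ᴴ (1 ⊗ A) 𝐔` in `ρ`. Density matrices
separate matrices through the trace pairing (already the pure states `|x⟩⟨x|` do, by
polarization), so the condition says `𝐔ᴴ (1 ⊗ A) 𝐔 = 1 ⊗ A`, i.e. that the unitary `𝐔` commutes
with `1 ⊗ A`. Finally `𝐔` is block-monomial: its only nonzero block in block row `h` is
`U_S(h g_i⁻¹)`, so commuting with `1 ⊗ A` means that `A` commutes with every `U_S(g)`.
-/

namespace Matrix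

section BlockMonomial

variable {K m R : Type*} [DecidableEq K]

def blockMonomial [Zero R] (σ : K → K) (V : K → Matrix m m R) : Matrix (K × m) (K × m) R :=
  of fun p q => if q.1 = σ p.1 then V p.1 p.2 q.2 else 0

theorem blockMonomial_injective [Zero R] (σ : K → K) :
    Function.Injective (blockMonomial (m := m) (R := R) σ) := by
  intro V W h
  ext k s t
  simpa [blockMonomial] using congrFun (congrFun h (k, s)) (σ k, t)

theorem blockMonomial_mul_one_kronecker [Fintype K] [Fintype m] [Semiring R] (σ : K → K)
    (V : K → Matrix m m R) (A : Matrix m m R) :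
    blockMonomial σ V * ((1 : Matrix K K R) ⊗ₖ A) = blockMonomial σ fun k => V k * A := by
  ext ⟨h, s⟩ ⟨k, t⟩
  simp [blockMonomial, mul_apply, Fintype.sum_prod_type, one_apply]

theorem one_kronecker_mul_blockMonomial [Fintype K] [Fintype m] [Semiring R] (σ : K → K)
    (V : K → Matrix m m R) (A : Matrix m m R) :
    ((1 : Matrix K K R) ⊗ₖ A) * blockMonomial σ V = blockMonomial σ fun k => A * V k := by
  ext ⟨h, s⟩ ⟨k, t⟩
  simp only [blockMonomial, mul_apply, Fintype.sum_prod_type, kroneckerMap_apply, one_apply,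
    of_apply]
  rw [Fintype.sum_eq_single h fun x hx => by simp [Ne.symm hx]]
  simp

theorem blockMonomial_mem_unitaryGroup [Fintype K] [Fintype m] [DecidableEq m] [CommRing R]
    [StarRing R] {σ : K → K} (hσ : Function.Injective σ) {V : K → Matrix m m R}
    (hV : ∀ k, V k ∈ unitaryGroup m R) :
    blockMonomial σ V ∈ unitaryGroup (K × m) R := by
  rw [mem_unitaryGroup_iff]
  ext ⟨h, s⟩ ⟨k, t⟩
  simp only [blockMonomial, mul_apply, of_apply, star_apply, ite_mul, zero_mul,
    Fintype.sum_prod_type, Finset.sum_ite_irrel, Finset.sum_const_zero, Finset.sum_ite_eq',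
    Finset.mem_univ, ↓reduceIte, hσ.eq_iff, one_apply, Prod.mk.injEq]
  obtain rfl | hne := eq_or_ne h k
  · simpa [mul_apply, one_apply] using congrFun (congrFun (mem_unitaryGroup_iff.mp (hV h)) s) t
  · simp [hne]

end BlockMonomial

section Density

variable {ι : Type*} [Fintype ι] [DecidableEq ι]

theorem ext_of_star_dotProduct_mulVec {M N : Matrix ι ι ℂ}
    (h : ∀ x : ι → ℂ, star x ⬝ᵥ M *ᵥ x = star x ⬝ᵥ N *ᵥ x) : M = N := by
  apply toEuclideanLin.injective
  rw [← ext_inner_map]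
  intro x
  simp only [EuclideanSpace.inner_eq_star_dotProduct, ofLp_toLpLin, toLin'_apply]
  rw [dotProduct_comm, star_dotProduct, h, ← star_dotProduct, dotProduct_comm]

omit [DecidableEq ι] in
theorem trace_vecMulVec_star_mul (x : ι → ℂ) (M : Matrix ι ι ℂ) :
    (vecMulVec x (star x) * M).trace = star x ⬝ᵥ M *ᵥ x := by
  rw [vecMulVec_mul, trace_vecMulVec, dotProduct_comm, dotProduct_mulVec]

theorem eq_of_forall_posSemidef_trace_mul_eq {M N : Matrix ι ι ℂ}
    (h : ∀ ρ : Matrix ι ι ℂ, ρ.PosSemidef → (ρ * M).trace = (ρ * N).trace) : M = N :=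
  ext_of_star_dotProduct_mulVec fun x => by
    simpa only [trace_vecMulVec_star_mul] using h _ (posSemidef_vecMulVec_self_star x)

theorem eq_of_forall_density_trace_mul_eq {M N : Matrix ι ι ℂ}
    (h : ∀ ρ : Matrix ι ι ℂ, ρ.PosSemidef → ρ.trace = 1 → (ρ * M).trace = (ρ * N).trace) :
    M = N := by
  refine eq_of_forall_posSemidef_trace_mul_eq fun ρ hρ => ?_
  obtain htr | htr := eq_or_ne ρ.trace 0
  · simp [hρ.trace_eq_zero_iff.mp htr]
  · have hnormalized := h (ρ.trace⁻¹ • ρ) (hρ.smul (inv_nonneg.mpr hρ.trace_nonneg))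
      (by rw [trace_smul, smul_eq_mul, inv_mul_cancel₀ htr])
    simpa [smul_mul_assoc, trace_smul, htr] using hnormalized

end Density

end Matrix

open Matrix

theorem Uqrf_eq_blockMonomial (U : G →* unitaryGroup (Fin n) ℂ) (gi gj : G) :
    Uqrf U gi gj =
      blockMonomial (fun h => gj * gi * h⁻¹) fun h => (U (h * gi⁻¹) : Matrix _ _ ℂ) := by
  ext ⟨h, s⟩ ⟨k, u⟩
  rw [Uqrf, Matrix.sum_apply, Fintype.sum_eq_single (h * gi⁻¹)]
  · simp [blockMonomial, single, mul_comm, mul_assoc, mul_left_comm, eq_comm]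
  · intro g hg
    have : g * gi ≠ h := fun hgh => hg (by rw [← hgh, mul_inv_cancel_right])
    simp [single, this]

theorem Uqrf_mem_unitaryGroup (U : G →* unitaryGroup (Fin n) ℂ) (gi gj : G) :
    Uqrf U gi gj ∈ unitaryGroup (G × Fin n) ℂ := by
  rw [Uqrf_eq_blockMonomial]
  exact blockMonomial_mem_unitaryGroup (fun a b hab => by simpa using hab) fun h => (U _).2

omit [CommGroup G] in
theorem trace_trF_mul (M : Matrix (G × Fin n) (G × Fin n) ℂ) (A : Matrix (Fin n) (Fin n) ℂ) :
    (trF M * A).trace = (M * ((1 : Matrix G G ℂ) ⊗ₖ A)).trace := by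
  simp only [trF, trace, diag, mul_apply, Fintype.sum_prod_type_right, kroneckerMap_apply,
    one_apply, of_apply]
  simp only [ite_mul, one_mul, zero_mul, mul_ite, mul_zero, Finset.sum_ite_eq',
    Finset.mem_univ, if_true, Finset.sum_mul]
  exact Finset.sum_congr rfl fun _ _ => Finset.sum_comm

omit [CommGroup G] in
theorem trace_trF_conj_mul (W ρ : Matrix (G × Fin n) (G × Fin n) ℂ)
    (A : Matrix (Fin n) (Fin n) ℂ) :
    (trF (W * ρ * Wᴴ) * A).trace = (ρ * (Wᴴ * ((1 : Matrix G G ℂ) ⊗ₖ A) * W)).trace := by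
  rw [trace_trF_mul, mul_assoc, mul_assoc, trace_mul_comm, mul_assoc, mul_assoc]

theorem system_averages_invariant_iff_general
    (U : G →* Matrix.unitaryGroup (Fin n) ℂ) (gi gj : G)
    (A : Matrix (Fin n) (Fin n) ℂ) :
    (∀ ρ : Matrix (G × Fin n) (G × Fin n) ℂ, ρ.PosSemidef → ρ.trace = 1 →
        (trF (Uqrf U gi gj * ρ * (Uqrf U gi gj)ᴴ) * A).trace = (trF ρ * A).trace) ↔
      (∀ g : G, A * (U g : Matrix (Fin n) (Fin n) ℂ) =
        (U g : Matrix (Fin n) (Fin n) ℂ) * A) := by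
  set W := Uqrf U gi gj with hW
  set Â : Matrix (G × Fin n) (G × Fin n) ℂ := 1 ⊗ₖ A
  calc _ ↔ ∀ ρ : Matrix (G × Fin n) (G × Fin n) ℂ, ρ.PosSemidef → ρ.trace = 1 →
          (ρ * (star W * Â * W)).trace = (ρ * Â).trace :=
        forall₃_congr fun _ _ _ => by
          rw [trace_trF_conj_mul, trace_trF_mul, star_eq_conjTranspose]
    _ ↔ star W * Â * W = Â := ⟨eq_of_forall_density_trace_mul_eq, fun h _ _ _ => by rw [h]⟩
    _ ↔ Commute W Â :=
        (commute_unitary_iff_star_left_conjugate (Uqrf_mem_unitaryGroup U gi gj)).symm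
    _ ↔ ∀ h, (U (h * gi⁻¹) : Matrix (Fin n) (Fin n) ℂ) * A = A * U (h * gi⁻¹) := by
        rw [Commute, SemiconjBy, hW, Uqrf_eq_blockMonomial, blockMonomial_mul_one_kronecker,
          one_kronecker_mul_blockMonomial, (blockMonomial_injective _).eq_iff, funext_iff]
    _ ↔ _ := ⟨fun h g => by simpa using (h (g * gi)).symm, fun h k => (h _).symm⟩

/-- QRF-invariant system observable averages. The expectation value of
a system observable `A` in the reduced system state agrees in both QRF perspectives for
every global density matrix iff `A` is translation-invariant. -/
theorem system_averages_invariant_iff (hn : 1 ≤ n)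
    (U : G →* Matrix.unitaryGroup (Fin n) ℂ) (gi gj : G)
    (A : Matrix (Fin n) (Fin n) ℂ) :
    (∀ ρ : Matrix (G × Fin n) (G × Fin n) ℂ, ρ.PosSemidef → ρ.trace = 1 →
        (trF (Uqrf U gi gj * ρ * (Uqrf U gi gj)ᴴ) * A).trace = (trF ρ * A).trace) ↔
      (∀ g : G, A * (U g : Matrix (Fin n) (Fin n) ℂ) =
        (U g : Matrix (Fin n) (Fin n) ℂ) * A) :=
  system_averages_invariant_iff_general U gi gj A
end
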